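/- arXiv:2106.15059 — 6 statements merged into one kernel-verified Lean document; each statement's English description precedes it below -/
import Mathlib

section
/- Fix n ≥ 3 and jumps j_0, j_1 ∈ [1, ⌊n/2⌋]. Let h = n − (j_0 + j_1) and H = ⟨h⟩ ≤ Z_n. Consider the sequence a_0 = 0, a_{m+1} = a_m + j_{m mod 2} (mod n) for m = 0,…,n−1, and let S be the set of its values. If j_0 ∈ H, then |S| ≤ |H|; if j_0 ∉ H, then |S| ≤ 2|H|. -/
/-- bound on the number of vertices reached by the periodic jump
sequence generated by `(j₀, j₁)` in terms of the subgroup `H = ⟨n - (j₀+j₁)⟩`. -/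
theorem stmt1 (n j0 j1 : ℕ) (hn : 3 ≤ n)
    (hj0 : 1 ≤ j0) (hj0' : j0 ≤ n / 2) (hj1 : 1 ≤ j1) (hj1' : j1 ≤ n / 2)
    (a : ℕ → ZMod n) (ha0 : a 0 = 0)
    (harec : ∀ m : ℕ, a (m + 1) = a m + (if m % 2 = 0 then (j0 : ZMod n) else (j1 : ZMod n))) :
    let H := AddSubgroup.zmultiples (((n - (j0 + j1) : ℕ)) : ZMod n)
    ((j0 : ZMod n) ∈ H → ((Finset.range n).image a).card ≤ Nat.card H) ∧
    ((j0 : ZMod n) ∉ H → ((Finset.range n).image a).card ≤ 2 * Nat.card H) := by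
  intro H
  haveI hn0 : NeZero n := ⟨by omega⟩
  have hsum : j0 + j1 ≤ n := by
    have := Nat.div_add_mod n 2
    omega
  have hsumH : ((j0 + j1 : ℕ) : ZMod n) ∈ H := by
    have h1 : ((n - (j0 + j1) : ℕ) : ZMod n) ∈ H := AddSubgroup.mem_zmultiples _
    have h2 : ((n - (j0 + j1) : ℕ) : ZMod n) = - ((j0 + j1 : ℕ) : ZMod n) := by
      rw [Nat.cast_sub hsum, ZMod.natCast_self, zero_sub]
    have h3 := neg_mem h1
    rwa [h2, neg_neg] at h3
  have key : ∀ k, a (2 * k) ∈ H ∧ a (2 * k + 1) - (j0 : ZMod n) ∈ H := by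
    intro k
    induction k with
    | zero =>
      constructor
      · simpa [ha0] using H.zero_mem
      · have := harec 0
        simp only [Nat.zero_mod, if_pos rfl, ha0, zero_add] at this
        simpa [this] using H.zero_mem
    | succ k ih =>
      have e1 : a (2 * (k + 1)) = a (2 * k + 1) + (j1 : ZMod n) := by
        have h2 := harec (2 * k + 1)
        have hm : (2 * k + 1) % 2 = 1 := by omega
        rw [hm] at h2
        simpa [show 2 * (k + 1) = 2 * k + 1 + 1 by ring] using h2
      have hA : a (2 * (k + 1)) ∈ H := by
        rw [e1]
        have : a (2 * k + 1) + (j1 : ZMod n)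
            = (a (2 * k + 1) - (j0 : ZMod n)) + ((j0 + j1 : ℕ) : ZMod n) := by
          push_cast; ring
        rw [this]
        exact add_mem ih.2 hsumH
      refine ⟨hA, ?_⟩
      have e2 : a (2 * (k + 1) + 1) = a (2 * (k + 1)) + (j0 : ZMod n) := by
        have h2 := harec (2 * (k + 1))
        have hm : (2 * (k + 1)) % 2 = 0 := by omega
        rw [hm] at h2
        simpa using h2
      rw [e2]
      simpa using hA
  have hall : ∀ m, a m ∈ H ∨ a m - (j0 : ZMod n) ∈ H := by
    intro m
    rcases Nat.even_or_odd m with ⟨k, hk⟩ | ⟨k, hk⟩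
    · left; have := (key k).1; rwa [show 2 * k = m by omega] at this
    · right; have := (key k).2; rwa [show 2 * k + 1 = m by omega] at this
  classical
  set T : Finset (ZMod n) := (H : Set (ZMod n)).toFinset with hT
  have hTcard : T.card = Nat.card H := by
    rw [hT, Set.toFinset_card]
    exact (Nat.card_eq_fintype_card).symm
  constructor
  · intro hj0H
    have hsub : (Finset.range n).image a ⊆ T := by
      intro x hx
      simp only [Finset.mem_image] at hx
      obtain ⟨m, _, rfl⟩ := hx
      rcases hall m with h | h
      · simpa [hT] using h
      · have : a m = (a m - (j0 : ZMod n)) + (j0 : ZMod n) := by ring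
        rw [this]
        simpa [hT] using add_mem h hj0H
    calc ((Finset.range n).image a).card ≤ T.card := Finset.card_le_card hsub
      _ = Nat.card H := hTcard
  · intro hj0H
    set T' : Finset (ZMod n) := T.image (fun x => x + (j0 : ZMod n)) with hT'
    have hT'card : T'.card = T.card :=
      Finset.card_image_of_injective _ (add_left_injective _)
    have hsub : (Finset.range n).image a ⊆ T ∪ T' := by
      intro x hx
      simp only [Finset.mem_image] at hx
      obtain ⟨m, _, rfl⟩ := hx
      rcases hall m with h | h
      · exact Finset.mem_union_left _ (by simpa [hT] using h)
      · refine Finset.mem_union_right _ ?_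
        rw [hT', Finset.mem_image]
        exact ⟨a m - (j0 : ZMod n), by simpa [hT] using h, by ring⟩
    calc ((Finset.range n).image a).card ≤ (T ∪ T').card := Finset.card_le_card hsub
      _ ≤ T.card + T'.card := Finset.card_union_le _ _
      _ = 2 * Nat.card H := by rw [hT'card, hTcard]; ring
end

section
/- Let f be a radio-k-labeling of the cycle C_n (with vertex ordering x_0,…,x_{n−1} by increasing labels) where k ≥ ⌊n/2⌋. Then for every i ∈ [0, n−3], f(x_{i+2}) − f(x_i) ≥ ⌈(3k + 3 − n)/2⌉. -/
/-- Distance between two vertices of the cycle `C_n` (vertices are `Fin n`). -/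
def cycleDist (n : ℕ) (u v : Fin n) : ℕ := min (v - u).val (u - v).val

/-- A radio-`k`-labeling of the cycle `C_n`. -/
def IsRadioLabeling (n k : ℕ) (f : Fin n → ℕ) : Prop :=
  ∀ u v : Fin n, u ≠ v → (k : ℤ) + 1 - cycleDist n u v ≤ |(f u : ℤ) - (f v : ℤ)|

/-- The span of a labeling: largest label minus smallest label. -/
def spanOf (n : ℕ) (f : Fin n → ℕ) : ℕ :=
  Finset.univ.sup fun u => Finset.univ.sup fun v => f u - f v

/-- The radio-`k`-number of `C_n`: minimum span over all radio-`k`-labelings. -/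
noncomputable def rn (n k : ℕ) : ℕ :=
  sInf {s | ∃ f : Fin n → ℕ, IsRadioLabeling n k f ∧ spanOf n f = s}

lemma aux_mod (n x y : ℕ) (hx : x < n) (hy : y < n) (h : (x + y) % n = 0) :
    x + y = 0 ∨ x + y = n := by
  obtain ⟨t, ht⟩ := Nat.dvd_of_mod_eq_zero h
  match t with
  | 0 => omega
  | 1 => omega
  | (m+2) =>
    have : n * 2 ≤ n * (m + 2) := Nat.mul_le_mul_left n (by omega)
    omega

lemma aux_sum (n : ℕ) (hn : 0 < n) (u v w : Fin n) :
    cycleDist n u v + cycleDist n v w + cycleDist n u w ≤ n := by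
  haveI : NeZero n := ⟨by omega⟩
  set a := (v - u).val with ha
  set a' := (u - v).val with ha'
  set b := (w - v).val with hb
  set b' := (v - w).val with hb'
  set c := (w - u).val with hc
  set c' := (u - w).val with hc'
  have h1 : a + a' = 0 ∨ a + a' = n := by
    apply aux_mod n a a' (v - u).isLt (u - v).isLt
    have : (v - u) + (u - v) = 0 := by abel
    have := congrArg Fin.val this
    rw [Fin.add_def] at this
    simpa [Fin.val_zero] using this
  have h2 : b + b' = 0 ∨ b + b' = n := by
    apply aux_mod n b b' (w - v).isLt (v - w).isLt
    have : (w - v) + (v - w) = 0 := by abel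
    have := congrArg Fin.val this
    rw [Fin.add_def] at this
    simpa [Fin.val_zero] using this
  have h3 : c + c' = 0 ∨ c + c' = n := by
    apply aux_mod n c c' (w - u).isLt (u - w).isLt
    have : (w - u) + (u - w) = 0 := by abel
    have := congrArg Fin.val this
    rw [Fin.add_def] at this
    simpa [Fin.val_zero] using this
  have h4 : (b + a) % n = c := by
    have : (w - v) + (v - u) = w - u := by abel
    have := congrArg Fin.val this
    rw [Fin.add_def] at this
    exact this
  have hab : b + a < 2 * n := by
    have := (v - u).isLt; have := (w - v).isLt; omega
  have h5 : c = a + b ∨ c + n = a + b := by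
    rcases Nat.lt_or_ge (b + a) n with h' | h'
    · left; rw [Nat.mod_eq_of_lt h'] at h4; omega
    · right
      have : (b + a) % n = (b + a - n) % n := by
        conv_lhs => rw [← Nat.sub_add_cancel h', Nat.add_mod_right]
      rw [this, Nat.mod_eq_of_lt (by omega)] at h4
      omega
  simp only [cycleDist]
  have := (v - u).isLt; have := (u - v).isLt; have := (w - v).isLt
  have := (v - w).isLt; have := (w - u).isLt; have := (u - w).isLt
  omega

/-- for a radio-k-labeling with vertices ordered by increasing label,
the labels of `x_i` and `x_{i+2}` differ by at least `⌈(3k+3-n)/2⌉`. -/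
theorem stmt3 (n k : ℕ) (hn : 3 ≤ n) (hk : n / 2 ≤ k)
    (f : Fin n → ℕ) (hf : IsRadioLabeling n k f)
    (x : Fin n → Fin n) (hx : Function.Bijective x)
    (hmono : StrictMono fun i => f (x i)) :
    ∀ i : ℕ, ∀ (hi : i + 2 < n),
      ⌈(3 * (k : ℚ) + 3 - n) / 2⌉ ≤ (f (x ⟨i + 2, hi⟩) : ℤ) - (f (x ⟨i, by omega⟩) : ℤ) := by
  intro i hi
  set u := x ⟨i, by omega⟩ with hu
  set v := x ⟨i + 1, by omega⟩ with hv
  set w := x ⟨i + 2, hi⟩ with hw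
  have huv : u ≠ v := fun h => by
    have := hx.injective h; simp [Fin.ext_iff] at this
  have hvw : v ≠ w := fun h => by
    have := hx.injective h; simp [Fin.ext_iff] at this
  have huw : u ≠ w := fun h => by
    have := hx.injective h; simp [Fin.ext_iff] at this
  have m1 : f u < f v := hmono (show (⟨i, by omega⟩ : Fin n) < ⟨i+1, by omega⟩ by simp)
  have m2 : f v < f w := hmono (show (⟨i+1, by omega⟩ : Fin n) < ⟨i+2, hi⟩ by simp)
  have r1 := hf u v huv
  have r2 := hf v w hvw
  have r3 := hf u w huw
  rw [abs_sub_comm, abs_of_nonneg (by omega)] at r1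
  rw [abs_sub_comm, abs_of_nonneg (by omega)] at r2
  rw [abs_sub_comm, abs_of_nonneg (by omega)] at r3
  have hsum := aux_sum n (by omega) u v w
  rw [Int.ceil_le]
  have key : (3 * (k : ℤ) + 3 - n) ≤ 2 * ((f w : ℤ) - (f u : ℤ)) := by
    have : ((cycleDist n u v : ℤ)) + (cycleDist n v w) + (cycleDist n u w) ≤ n := by
      exact_mod_cast hsum
    linarith
  have key' : (3 * (k : ℚ) + 3 - n) ≤ 2 * ((f w : ℚ) - (f u : ℚ)) := by exact_mod_cast key
  push_cast
  linarith
end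

section
/- For n > 2 even and k ≥ n/2, every radio-k-labeling of C_n has span at least ⌈(3k+3−n)/2⌉ · (n−2)/2 + k − n/2 + 1. Hence rn_k(C_n) ≥ ⌈(3k+3−n)/2⌉·(n−2)/2 + k − n/2 + 1. -/
lemma my_sub_val_add {n : ℕ} [NeZero n] {u v : Fin n} (h : u ≠ v) :
    (v - u).val + (u - v).val = n := by
  have hn : 0 < n := Nat.pos_of_ne_zero (NeZero.ne n)
  have h1 : v - u ≠ 0 := sub_ne_zero.mpr h.symm
  have hz : ((v - u) + (u - v)).val = 0 := by
    rw [show (v - u) + (u - v) = 0 by abel]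
    rfl
  rw [Fin.val_add] at hz
  have hd : n ∣ (v - u).val + (u - v).val := Nat.dvd_of_mod_eq_zero hz
  have hp : (v - u).val ≠ 0 := by
    intro h0
    exact h1 (Fin.ext (by simp [h0]))
  obtain ⟨t, ht⟩ := hd
  have h1v : (v - u).val < n := (v - u).isLt
  have h2v : (u - v).val < n := (u - v).isLt
  have ht2 : t < 2 := by
    by_contra hc
    push_neg at hc
    have : n * 2 ≤ n * t := Nat.mul_le_mul_left n hc
    omega
  interval_cases t <;> omega

lemma my_cycleDist_triple {n : ℕ} [NeZero n] {u v w : Fin n}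
    (huv : u ≠ v) (hvw : v ≠ w) (huw : u ≠ w) :
    cycleDist n u v + cycleDist n v w + cycleDist n u w ≤ n := by
  have hn : 0 < n := Nat.pos_of_ne_zero (NeZero.ne n)
  have ha := my_sub_val_add huv
  have hb := my_sub_val_add hvw
  have hc := my_sub_val_add huw
  have hz : ((v - u) + (w - v) + (u - w)).val = 0 := by
    rw [show (v - u) + (w - v) + (u - w) = 0 by abel]
    rfl
  have e1 : ((v - u) + (w - v) + (u - w)).val
      = ((v - u).val + (w - v).val + (u - w).val) % n := by
    rw [Fin.val_add, Fin.val_add, Nat.mod_add_mod]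
  rw [e1] at hz
  have hd : n ∣ (v - u).val + (w - v).val + (u - w).val := Nat.dvd_of_mod_eq_zero hz
  have hp1 : (v - u).val ≠ 0 := by
    intro h0
    exact (sub_ne_zero.mpr huv.symm : v - u ≠ 0) (Fin.ext (by simp [h0]))
  obtain ⟨t, ht⟩ := hd
  have h1v : (v - u).val < n := (v - u).isLt
  have h2v : (w - v).val < n := (w - v).isLt
  have h3v : (u - w).val < n := (u - w).isLt
  have ht3 : t < 3 := by
    by_contra hcc
    push_neg at hcc
    have : n * 3 ≤ n * t := Nat.mul_le_mul_left n hcc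
    omega
  unfold cycleDist
  interval_cases t <;> omega

lemma my_cycleDist_le_half {n : ℕ} [NeZero n] {u v : Fin n} (h : u ≠ v) :
    cycleDist n u v ≤ n / 2 := by
  have := my_sub_val_add h
  unfold cycleDist
  omega

/-- lower bound for the span of radio-k-labelings of `C_n`, `n` even. -/
theorem stmt5 (n k : ℕ) (hn : 2 < n) (he : Even n) (hk : n / 2 ≤ k) :
    (∀ f : Fin n → ℕ, IsRadioLabeling n k f →
      (3 * k + 4 - n) / 2 * ((n - 2) / 2) + (k - n / 2) + 1 ≤ spanOf n f) ∧
    (3 * k + 4 - n) / 2 * ((n - 2) / 2) + (k - n / 2) + 1 ≤ rn n k := by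
  have hn0 : 0 < n := by omega
  have he' : n % 2 = 0 := Nat.even_iff.mp he
  haveI : NeZero n := ⟨by omega⟩
  have main : ∀ f : Fin n → ℕ, IsRadioLabeling n k f →
      (3 * k + 4 - n) / 2 * ((n - 2) / 2) + (k - n / 2) + 1 ≤ spanOf n f := by
    intro f hf
    set σ := Tuple.sort f with hσ
    have hmono : Monotone (f ∘ σ) := Tuple.monotone_sort f
    have hstep : ∀ i j : Fin n, i < j →
        (k : ℤ) + 1 - cycleDist n (σ i) (σ j) ≤ (f (σ j) : ℤ) - f (σ i) := by
      intro i j hij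
      have hne : σ i ≠ σ j := σ.injective.ne (ne_of_lt hij)
      have h1 := hf (σ i) (σ j) hne
      have h2 : f (σ i) ≤ f (σ j) := hmono hij.le
      have h2' : (f (σ i) : ℤ) ≤ f (σ j) := by exact_mod_cast h2
      rw [abs_sub_comm, abs_of_nonneg (sub_nonneg.mpr h2')] at h1
      linarith
    set c : ℕ := (3 * k + 4 - n) / 2 with hc
    have hstep2 : ∀ (i : ℕ) (h1 : i < n) (h2 : i + 2 < n),
        (c : ℤ) ≤ (f (σ ⟨i + 2, h2⟩) : ℤ) - f (σ ⟨i, h1⟩) := by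
      intro i h1 h2
      have hmid : i + 1 < n := by omega
      have i01 : (⟨i, h1⟩ : Fin n) < ⟨i + 1, hmid⟩ := Fin.mk_lt_mk.mpr (by omega)
      have i12 : (⟨i + 1, hmid⟩ : Fin n) < ⟨i + 2, h2⟩ := Fin.mk_lt_mk.mpr (by omega)
      have i02 : (⟨i, h1⟩ : Fin n) < ⟨i + 2, h2⟩ := Fin.mk_lt_mk.mpr (by omega)
      have s1 := hstep _ _ i01
      have s2 := hstep _ _ i12
      have s3 := hstep _ _ i02
      have htr := my_cycleDist_triple (σ.injective.ne (ne_of_lt i01))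
        (σ.injective.ne (ne_of_lt i12)) (σ.injective.ne (ne_of_lt i02))
      omega
    have hchain : ∀ (j : ℕ) (h : 2 * j < n),
        (c : ℤ) * j ≤ (f (σ ⟨2 * j, h⟩) : ℤ) - f (σ ⟨0, hn0⟩) := by
      intro j
      induction j with
      | zero => intro h; simp
      | succ j ih =>
        intro h
        have h2j : 2 * j < n := by omega
        have h2j2 : 2 * j + 2 < n := by omega
        have e : (⟨2 * (j + 1), h⟩ : Fin n) = ⟨2 * j + 2, h2j2⟩ := Fin.ext (by omega : 2 * (j + 1) = 2 * j + 2)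
        rw [e]
        have hA := hstep2 (2 * j) h2j h2j2
        have hB := ih h2j
        push_cast
        push_cast at hB
        linarith
    -- assemble
    have hm1 : 1 ≤ n / 2 := by omega
    have hlt : 2 * (n / 2 - 1) < n := by omega
    have hlast : n - 1 < n := by omega
    have hch := hchain (n / 2 - 1) hlt
    have iLL : (⟨2 * (n / 2 - 1), hlt⟩ : Fin n) < ⟨n - 1, hlast⟩ := Fin.mk_lt_mk.mpr (by omega)
    have hst := hstep _ _ iLL
    have hdist := my_cycleDist_le_half (σ.injective.ne (ne_of_lt iLL))
    have h0L : (⟨0, hn0⟩ : Fin n) ≤ ⟨n - 1, hlast⟩ := Fin.mk_le_mk.mpr (by omega)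
    have hZA : f (σ ⟨0, hn0⟩) ≤ f (σ ⟨n - 1, hlast⟩) := hmono h0L
    have hspan : f (σ ⟨n - 1, hlast⟩) - f (σ ⟨0, hn0⟩) ≤ spanOf n f := by
      refine le_trans ?_ (Finset.le_sup (f := fun u => Finset.univ.sup fun v => f u - f v)
        (Finset.mem_univ (σ ⟨n - 1, hlast⟩)))
      exact Finset.le_sup (f := fun v => f (σ ⟨n - 1, hlast⟩) - f v)
        (Finset.mem_univ (σ ⟨0, hn0⟩))
    refine le_trans ?_ hspan
    have e2 : (n - 2) / 2 = n / 2 - 1 := by omega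
    rw [e2]
    zify [hZA, hk, hm1]
    push_cast [Nat.cast_sub hm1] at hch ⊢
    have hdist' : (cycleDist n (σ ⟨2 * (n / 2 - 1), hlt⟩) (σ ⟨n - 1, hlast⟩) : ℤ)
        ≤ ((n / 2 : ℕ) : ℤ) := by exact_mod_cast hdist
    push_cast at hdist'
    linarith
  refine ⟨main, ?_⟩
  have hex : ∃ s, s ∈ {s | ∃ f : Fin n → ℕ, IsRadioLabeling n k f ∧ spanOf n f = s} := by
    refine ⟨spanOf n (fun u => (k + 1) * u.val), fun u => (k + 1) * u.val, ?_, rfl⟩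
    intro u v huv
    have hne : (u.val : ℤ) ≠ v.val := by
      intro hval
      exact huv (Fin.ext (by exact_mod_cast hval))
    have h1 : (k : ℤ) + 1 ≤ |((k + 1) * u.val : ℕ) - (((k + 1) * v.val : ℕ) : ℤ)| := by
      have : (((k + 1) * u.val : ℕ) : ℤ) - ((k + 1) * v.val : ℕ) =
          ((k : ℤ) + 1) * ((u.val : ℤ) - v.val) := by push_cast; ring
      rw [this, abs_mul]
      have habs : (1 : ℤ) ≤ |(u.val : ℤ) - v.val| := by
        rcases lt_or_gt_of_ne hne with h | h
        · rw [abs_sub_comm, abs_of_pos (by omega)]; omega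
        · rw [abs_of_pos (by omega)]; omega
      have hk1 : |(k : ℤ) + 1| = (k : ℤ) + 1 := abs_of_nonneg (by positivity)
      calc (k : ℤ) + 1 = ((k : ℤ) + 1) * 1 := by ring
        _ ≤ |(k : ℤ) + 1| * |(u.val : ℤ) - v.val| := by
            rw [hk1]; exact mul_le_mul_of_nonneg_left habs (by positivity)
    have hd : (0 : ℤ) ≤ (cycleDist n u v : ℤ) := by positivity
    calc (k : ℤ) + 1 - cycleDist n u v ≤ (k : ℤ) + 1 := by linarith
      _ ≤ _ := h1
  exact le_csInf hex fun s hs => by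
    obtain ⟨f, hlab, hspan⟩ := hs
    exact hspan ▸ main f hlab
end

section
/- For k ≥ n − 3 and n odd, rn_k(C_n) = ((n−1)/2)(2k + 3 − n). -/
lemma fin_val_sub (n : ℕ) (u v : Fin n) :
    ((u - v).val : ℤ) = ((u.val : ℤ) - v.val) % n := by
  rw [Fin.sub_def]
  have hv : v.val ≤ n := le_of_lt v.isLt
  push_cast [Nat.cast_sub hv]
  rw [show ((n : ℤ) - v.val + u.val) = ((u.val : ℤ) - v.val) + n * 1 by ring,
    Int.add_mul_emod_self_left]

lemma fin_val_sub_add (n : ℕ) [NeZero n] (u v : Fin n) (h : u ≠ v) :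
    (u - v).val + (v - u).val = n := by
  have h1 : v - u = -(u - v) := (neg_sub u v).symm
  have h2 : (u - v).val ≠ 0 := by
    have : u - v ≠ 0 := sub_ne_zero.mpr h
    intro h0; exact this (Fin.ext (h0.trans (Fin.val_zero n).symm))
  have h3 := (u - v).isLt
  rw [h1, Fin.neg_def]
  simp only []
  rw [Nat.mod_eq_of_lt (by omega)]
  omega

lemma int_dvd_small (n x : ℤ) (h : n ∣ x) (h1 : |x| < n) : x = 0 := by
  rcases eq_or_ne x 0 with rfl | hx
  · rfl
  · have := Int.le_of_dvd (abs_pos.mpr hx) ((dvd_abs n x).mpr h)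
    omega

lemma int_dvd_eq (n x : ℤ) (h : n ∣ x) (h1 : 0 < x) (h2 : x < 2 * n) : x = n := by
  have hn : 0 < n := by linarith
  have h3 : x - n = 0 := by
    apply int_dvd_small n (x - n) (by exact dvd_sub h dvd_rfl)
    rw [abs_lt]; omega
  omega

lemma cycleDist_le (n m : ℕ) (hm : n = 2 * m + 1) (u v : Fin n) :
    cycleDist n u v ≤ m := by
  haveI : NeZero n := ⟨by omega⟩
  unfold cycleDist
  rcases eq_or_ne u v with rfl | h
  · simp
  · have := fin_val_sub_add n u v h
    omega

lemma cycleDist_pos (n : ℕ) [NeZero n] {u v : Fin n} (h : u ≠ v) :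
    1 ≤ cycleDist n u v := by
  have := fin_val_sub_add n u v h
  have h2 : (u - v).val ≠ 0 := by
    have : u - v ≠ 0 := sub_ne_zero.mpr h
    intro h0; exact this (Fin.ext (h0.trans (Fin.val_zero n).symm))
  unfold cycleDist
  have hn : 0 < n := Nat.pos_of_ne_zero (NeZero.ne n)
  omega

lemma construction (n k m c : ℕ) (hm : n = 2 * m + 1) (hm1 : 1 ≤ m)
    (hk : 2 * m ≤ k + 2) (hc : c = k + 1 - m) :
    ∃ f : Fin n → ℕ, IsRadioLabeling n k f ∧ spanOf n f = 2 * m * c := by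
  haveI : NeZero n := ⟨by omega⟩
  have hnpos : 0 < n := by omega
  have hcz : (c : ℤ) = (k : ℤ) + 1 - m := by
    have : m ≤ k + 1 := by omega
    omega
  set σ : Fin n → ℕ := fun v => (2 * (n - v.val)) % n with hσ
  set f : Fin n → ℕ := fun v => σ v * c with hf
  have hσlt : ∀ v : Fin n, σ v < n := fun v => Nat.mod_lt _ hnpos
  have hσdvd : ∀ v : Fin n, (n : ℤ) ∣ (σ v : ℤ) + 2 * v.val := by
    intro v
    have hv : v.val ≤ n := le_of_lt v.isLt
    have h1 : (σ v : ℤ) = (2 * (n : ℤ) - 2 * v.val) % n := by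
      simp only [hσ]
      push_cast [Nat.cast_sub hv]
      ring_nf
    have h2 := Int.emod_add_mul_ediv (2 * (n : ℤ) - 2 * v.val) n
    refine ⟨2 - (2 * (n : ℤ) - 2 * v.val) / n, ?_⟩
    rw [h1]; linarith
  have hcop : IsCoprime (n : ℤ) 2 := by
    rw [Int.isCoprime_iff_gcd_eq_one]
    have : Nat.Coprime n 2 := Nat.coprime_two_right.mpr ⟨m, by omega⟩
    simpa [Int.gcd] using this
  -- key divisibility between two vertices
  have hkey : ∀ u v : Fin n, (n : ℤ) ∣ ((σ u : ℤ) - σ v) + 2 * ((u.val : ℤ) - v.val) := by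
    intro u v
    have := dvd_sub (hσdvd u) (hσdvd v)
    convert this using 1; rfl; ring
  have hinj : ∀ u v : Fin n, u ≠ v → (σ u : ℤ) ≠ σ v := by
    intro u v huv heq
    have h1 : (n : ℤ) ∣ 2 * ((u.val : ℤ) - v.val) := by
      have := hkey u v; rw [heq] at this; simpa using this
    have h2 : (n : ℤ) ∣ ((u.val : ℤ) - v.val) := hcop.dvd_of_dvd_mul_left h1
    have h3 : (u.val : ℤ) - v.val = 0 := by
      apply int_dvd_small n _ h2
      have := u.isLt; have := v.isLt
      rw [abs_lt]; push_cast; omega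
    exact huv (Fin.ext (by omega))
  refine ⟨f, ?_, ?_⟩
  · -- radio labeling
    intro u v huv
    have hd := cycleDist_le n m hm u v
    have hdpos := cycleDist_pos n huv
    have habs : |(f u : ℤ) - f v| = |(σ u : ℤ) - σ v| * c := by
      simp only [hf]
      push_cast
      rw [← sub_mul, abs_mul, abs_of_nonneg (by positivity : (0:ℤ) ≤ (c:ℤ))]
    rw [habs]
    have hne := hinj u v huv
    have h1 : 1 ≤ |(σ u : ℤ) - σ v| := by
      rcases abs_pos.mpr (sub_ne_zero.mpr hne) with h; omega
    rcases lt_or_ge (|(σ u : ℤ) - σ v|) 2 with hsm | hlg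
    · -- |σu - σv| = 1, distance is m
      have heps : (σ u : ℤ) - σ v = 1 ∨ (σ u : ℤ) - σ v = -1 := by
        rcases abs_sub_lt_iff.mp hsm with ⟨ha, hb⟩; omega
      -- n ∣ (m+1)(σu-σv) + (u - v)
      have hk2 : (n : ℤ) ∣ ((m : ℤ) + 1) * ((σ u : ℤ) - σ v) + ((u.val : ℤ) - v.val) := by
        have h2 := hkey u v
        have h3 : (n : ℤ) ∣ ((m : ℤ) + 1) * (((σ u : ℤ) - σ v) + 2 * ((u.val : ℤ) - v.val)) :=
          Dvd.dvd.mul_left h2 _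
        have h4 : (n : ℤ) ∣ (n : ℤ) * ((u.val : ℤ) - v.val) := Dvd.dvd.mul_right dvd_rfl _
        have h5 := dvd_sub h3 h4
        convert h5 using 1; rfl
        push_cast [hm]; ring
      set w : ℕ := (u - v).val with hw
      have hwz : (w : ℤ) = ((u.val : ℤ) - v.val) % n := fin_val_sub n u v
      have hwdvd : (n : ℤ) ∣ ((u.val : ℤ) - v.val) - w := by
        rw [hwz, Int.emod_def]
        exact ⟨((u.val : ℤ) - v.val) / n, by ring⟩
      have hkey2 : (n : ℤ) ∣ ((m : ℤ) + 1) * ((σ u : ℤ) - σ v) + w := by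
        have := dvd_sub hk2 hwdvd
        convert this using 1; rfl; ring
      have hwlt : w < n := (u - v).isLt
      have hwval : w = m ∨ w = m + 1 := by
        rcases heps with heps | heps
        · rw [heps] at hkey2
          have : ((w : ℤ) + (m + 1)) = n := by
            apply int_dvd_eq n _ (by convert hkey2 using 1; ring) (by positivity)
            push_cast [hm]; omega
          left; push_cast [hm] at this; omega
        · rw [heps] at hkey2
          have : ((w : ℤ) - (m + 1)) = 0 := by
            apply int_dvd_small n _ (by convert hkey2 using 1; ring)
            rw [abs_lt]; push_cast [hm]; omega
          right; omega
      have hdist : cycleDist n u v = m := by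
        have hsum := fin_val_sub_add n u v huv
        unfold cycleDist
        omega
      have habs1 : |(σ u : ℤ) - σ v| = 1 := by
        rcases heps with heps | heps <;> rw [heps] <;> simp
      rw [hdist, habs1, one_mul]
      omega
    · -- |σu - σv| ≥ 2
      have h2c : (k : ℤ) ≤ 2 * c := by omega
      have : (k : ℤ) + 1 - cycleDist n u v ≤ (k : ℤ) := by
        have : (1 : ℤ) ≤ cycleDist n u v := by exact_mod_cast hdpos
        omega
      calc (k : ℤ) + 1 - cycleDist n u v ≤ (k : ℤ) := this
        _ ≤ 2 * c := h2c
        _ ≤ |(σ u : ℤ) - σ v| * c := by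
            apply mul_le_mul_of_nonneg_right hlg (by positivity)
  · -- span equals 2*m*c
    apply le_antisymm
    · apply Finset.sup_le
      intro u _
      apply Finset.sup_le
      intro v _
      have h1 : f u ≤ 2 * m * c := by
        have := hσlt u
        have : σ u ≤ 2 * m := by omega
        calc f u = σ u * c := rfl
          _ ≤ 2 * m * c := Nat.mul_le_mul_right c this
      omega
    · have hu0 : (m + 1) < n := by omega
      set u0 : Fin n := ⟨m + 1, hu0⟩ with hu0'
      have hfu0 : f u0 = 2 * m * c := by
        have h1 : σ u0 = 2 * m := by
          simp only [hσ, hu0']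
          rw [show 2 * (n - (m + 1)) = 2 * m by omega]
          exact Nat.mod_eq_of_lt (by omega)
        simp only [hf, h1]
      have hf0 : f 0 = 0 := by
        have h1 : σ 0 = 0 := by
          simp only [hσ]
          rw [Fin.val_zero, Nat.sub_zero]
          simp [Nat.mul_mod_left, Nat.mod_self]
        simp [hf, h1]
      calc 2 * m * c = f u0 - f 0 := by omega
        _ ≤ Finset.univ.sup fun v => f u0 - f v :=
            Finset.le_sup (f := fun v => f u0 - f v) (Finset.mem_univ (0 : Fin n))
        _ ≤ spanOf n f := by
            unfold spanOf
            exact Finset.le_sup (f := fun u => Finset.univ.sup fun v => f u - f v)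
              (Finset.mem_univ u0)

lemma gap_lemma (s : Finset ℕ) (c : ℕ) (hc : 0 < c) (hs : s.Nonempty)
    (h : ∀ a ∈ s, ∀ b ∈ s, a < b → a + c ≤ b) :
    (s.card - 1) * c ≤ s.max' hs - s.min' hs := by
  set mn := s.min' hs with hmn
  set mx := s.max' hs with hmx
  have hcard : s.card ≤ (mx - mn) / c + 1 := by
    have := Finset.card_le_card_of_injOn (fun x => (x - mn) / c)
      (s := s) (t := Finset.range ((mx - mn) / c + 1))
      (fun x hx => by
        simp only [Finset.mem_coe, Finset.mem_range, Nat.lt_succ_iff]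
        exact Nat.div_le_div_right (Nat.sub_le_sub_right (s.le_max' x hx) mn))
      (fun a ha b hb hab => by
        simp only at hab
        by_contra hne
        rcases Nat.lt_or_ge a b with hlt | hge
        · have h1 := h a ha b hb hlt
          have h2 : mn ≤ a := s.min'_le a ha
          have : (a - mn) / c + 1 ≤ (b - mn) / c := by
            calc (a - mn) / c + 1 = ((a - mn) + c) / c := by
                  rw [Nat.add_div_right _ hc]
              _ ≤ (b - mn) / c := Nat.div_le_div_right (by omega)
          omega
        · have hlt : b < a := by omega
          have h1 := h b hb a ha hlt
          have h2 : mn ≤ b := s.min'_le b hb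
          have : (b - mn) / c + 1 ≤ (a - mn) / c := by
            calc (b - mn) / c + 1 = ((b - mn) + c) / c := by
                  rw [Nat.add_div_right _ hc]
              _ ≤ (a - mn) / c := Nat.div_le_div_right (by omega)
          omega)
    simpa using this
  have hstep : s.card - 1 ≤ (mx - mn) / c := Nat.sub_le_iff_le_add.mpr hcard
  calc (s.card - 1) * c ≤ ((mx - mn) / c) * c := Nat.mul_le_mul_right c hstep
    _ ≤ mx - mn := Nat.div_mul_le_self _ _

lemma lower_bound (n k m c : ℕ) (hm : n = 2 * m + 1) (hm1 : 1 ≤ m)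
    (hc : c = k + 1 - m) (hcpos : 0 < c) (f : Fin n → ℕ)
    (hf : IsRadioLabeling n k f) : 2 * m * c ≤ spanOf n f := by
  haveI : NeZero n := ⟨by omega⟩
  have hcz : (c : ℤ) = (k : ℤ) + 1 - m := by omega
  have hgap : ∀ u v : Fin n, u ≠ v → (c : ℤ) ≤ |(f u : ℤ) - f v| := by
    intro u v huv
    have h1 := hf u v huv
    have h2 : (cycleDist n u v : ℤ) ≤ m := by exact_mod_cast cycleDist_le n m hm u v
    linarith
  set s : Finset ℕ := Finset.univ.image f with hs
  have hsne : s.Nonempty := ⟨f 0, Finset.mem_image.mpr ⟨0, Finset.mem_univ _, rfl⟩⟩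
  have hinj : Function.Injective f := by
    intro u v huv
    by_contra hne
    have := hgap u v hne
    rw [huv] at this
    simp at this
    omega
  have hcards : s.card = n := by
    rw [hs, Finset.card_image_of_injective _ hinj]
    simp
  have hpair : ∀ a ∈ s, ∀ b ∈ s, a < b → a + c ≤ b := by
    intro a ha b hb hab
    obtain ⟨u, _, rfl⟩ := Finset.mem_image.mp ha
    obtain ⟨v, _, rfl⟩ := Finset.mem_image.mp hb
    have huv : u ≠ v := fun h => by rw [h] at hab; omega
    have h1 := hgap u v huv
    have h2 : |(f u : ℤ) - f v| = (f v : ℤ) - f u := by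
      rw [abs_of_nonpos (by omega : (f u : ℤ) - f v ≤ 0)]; ring
    rw [h2] at h1
    omega
  have hmain := gap_lemma s c hcpos hsne hpair
  rw [hcards] at hmain
  have hn1 : n - 1 = 2 * m := by omega
  rw [hn1] at hmain
  obtain ⟨u0, _, hu0⟩ := Finset.mem_image.mp (s.max'_mem hsne)
  obtain ⟨v0, _, hv0⟩ := Finset.mem_image.mp (s.min'_mem hsne)
  have hspan : s.max' hsne - s.min' hsne ≤ spanOf n f := by
    rw [← hu0, ← hv0]
    calc f u0 - f v0 ≤ Finset.univ.sup fun v => f u0 - f v :=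
          Finset.le_sup (f := fun v => f u0 - f v) (Finset.mem_univ v0)
      _ ≤ spanOf n f := by
          unfold spanOf
          exact Finset.le_sup (f := fun u => Finset.univ.sup fun v => f u - f v)
            (Finset.mem_univ u0)
  omega


/-- for `k ≥ n - 3` and `n` odd,
`rn_k(C_n) = ((n-1)/2)(2k+3-n)`. -/
theorem stmt9 (n k : ℕ) (hn : 3 ≤ n) (ho : Odd n) (hk : n - 3 ≤ k) :
    rn n k = (n - 1) / 2 * (2 * k + 3 - n) := by
  obtain ⟨m, hm⟩ := ho
  have hm1 : 1 ≤ m := by omega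
  have hk2 : 2 * m ≤ k + 2 := by omega
  set c := k + 1 - m with hc
  obtain ⟨F, hF, hFs⟩ := construction n k m c hm hm1 hk2 hc
  have hmem : 2 * m * c ∈ {s | ∃ f : Fin n → ℕ, IsRadioLabeling n k f ∧ spanOf n f = s} :=
    ⟨F, hF, hFs⟩
  have hub : rn n k ≤ 2 * m * c := Nat.sInf_le hmem
  have hlb : 2 * m * c ≤ rn n k := by
    apply le_csInf ⟨_, hmem⟩
    rintro x ⟨f, hf, rfl⟩
    rcases Nat.eq_zero_or_pos c with hc0 | hcpos
    · simp [hc0]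
    · exact lower_bound n k m c hm hm1 hc hcpos f hf
  have heq : rn n k = 2 * m * c := le_antisymm hub hlb
  rw [heq]
  have h1 : (n - 1) / 2 = m := by omega
  have h2 : 2 * k + 3 - n = 2 * c := by omega
  rw [h1, h2]
  ring
end

section
/- Let n be odd, h < n with h odd and gcd(n,h) = 1, and k even with ⌊n/2⌋ ≤ k < n−3 and h = (n−k−1)/2. Define x_i = i·(n−h)/2 (mod n) and f(x_i) = i·(k+1−h)/2. Then f is a radio-k-labeling of C_n with span (n−1)(k+1−h)/2, so rn_k(C_n) = ⌈(3k+3−n)/2⌉·(n−1)/2. -/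
private lemma mod_unique {n a b : ℕ} (ha : a < n) (hb : b < n)
    (hmod : (a : ℤ) ≡ (b : ℤ) [ZMOD n]) : a = b := by
  have h1 : (a : ℤ) % n = (b : ℤ) % n := hmod
  rw [Int.emod_eq_of_lt (by positivity) (by exact_mod_cast ha),
      Int.emod_eq_of_lt (by positivity) (by exact_mod_cast hb)] at h1
  exact_mod_cast h1

private lemma natmod_int (n a : ℕ) : ((a % n : ℕ) : ℤ) ≡ (a : ℤ) [ZMOD n] := by
  have h : ((a % n : ℕ) : ℤ) = (a : ℤ) % n := by push_cast; ring
  rw [h]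
  exact Int.emod_emod_of_dvd a dvd_rfl

private lemma fin_sub_val_mod {n : ℕ} (a b : Fin n) :
    ((a - b).val : ℤ) ≡ (a.val : ℤ) - b.val [ZMOD n] := by
  rw [Fin.sub_def]
  show (((n - b.val + a.val) % n : ℕ) : ℤ) ≡ _ [ZMOD n]
  calc (((n - b.val + a.val) % n : ℕ) : ℤ)
      ≡ ((n - b.val + a.val : ℕ) : ℤ) [ZMOD n] := natmod_int n _
    _ = (n : ℤ) - b.val + a.val := by
        push_cast [Nat.cast_sub (Nat.le_of_lt b.isLt)]; ring
    _ ≡ (a.val : ℤ) - b.val [ZMOD n] := by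
        rw [Int.ModEq]
        conv_lhs => rw [show (n : ℤ) - b.val + a.val = ((a.val : ℤ) - b.val) + n * 1 by ring]
        rw [Int.add_mul_emod_self_left]

private lemma fin_sub_ne_zero {n : ℕ} {a b : Fin n} (hab : a ≠ b) : (a - b).val ≠ 0 := by
  intro h0
  have hm := fin_sub_val_mod a b
  rw [h0] at hm
  have : a.val = b.val := by
    apply mod_unique a.isLt b.isLt
    have := hm.symm
    simpa using (Int.ModEq.add_right (b.val : ℤ) this)
  exact hab (Fin.ext this)

private lemma fin_neg_val {n : ℕ} (a b : Fin n) (hab : a ≠ b) :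
    (b - a).val = n - (a - b).val := by
  have h1 := fin_sub_ne_zero hab
  have h2 := fin_sub_ne_zero (Ne.symm hab)
  apply mod_unique (b - a).isLt (by omega)
  calc ((b - a).val : ℤ) ≡ (b.val : ℤ) - a.val [ZMOD n] := fin_sub_val_mod b a
    _ ≡ (n : ℤ) - ((a.val : ℤ) - b.val) [ZMOD n] := by
        rw [Int.ModEq]
        conv_rhs => rw [show (n:ℤ) - ((a.val:ℤ) - b.val) = ((b.val:ℤ) - a.val) + n * 1 by ring]
        rw [Int.add_mul_emod_self_left]
    _ ≡ (n : ℤ) - ((a - b).val : ℤ) [ZMOD n] := (Int.ModEq.sub_left _ (fin_sub_val_mod a b)).symm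
    _ = ((n - (a - b).val : ℕ) : ℤ) := by
        rw [Nat.cast_sub (a - b).isLt.le]

private lemma cycleDist_triangle {n : ℕ} (u v w : Fin n)
    (huv : u ≠ v) (hvw : v ≠ w) (huw : u ≠ w) :
    cycleDist n u v + cycleDist n v w + cycleDist n u w ≤ n := by
  have hn : 0 < n := u.pos
  obtain ⟨a, hadef⟩ : ∃ x, (v - u).val = x := ⟨_, rfl⟩
  obtain ⟨b, hbdef⟩ : ∃ x, (w - v).val = x := ⟨_, rfl⟩
  obtain ⟨c, hcdef⟩ : ∃ x, (u - w).val = x := ⟨_, rfl⟩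
  have ha0 : a ≠ 0 := hadef ▸ fin_sub_ne_zero (Ne.symm huv)
  have hb0 : b ≠ 0 := hbdef ▸ fin_sub_ne_zero (Ne.symm hvw)
  have hc0 : c ≠ 0 := hcdef ▸ fin_sub_ne_zero huw
  have ha : a < n := hadef ▸ (v - u).isLt
  have hb : b < n := hbdef ▸ (w - v).isLt
  have hc : c < n := hcdef ▸ (u - w).isLt
  have hsum : (n : ℤ) ∣ ((a + b + c : ℕ) : ℤ) := by
    have h := ((fin_sub_val_mod v u).add (fin_sub_val_mod w v)).add (fin_sub_val_mod u w)
    rw [hadef, hbdef, hcdef] at h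
    have h2 : ((a : ℤ) + b + c) ≡ 0 [ZMOD n] := by
      calc ((a : ℤ) + b + c)
          ≡ ((v.val:ℤ) - u.val) + ((w.val:ℤ) - v.val) + ((u.val:ℤ) - w.val) [ZMOD n] := h
        _ = 0 := by ring
    have := (Int.modEq_zero_iff_dvd).mp h2
    exact_mod_cast this
  have hsumn : n ∣ (a + b + c) := by exact_mod_cast hsum
  have hc2 : a + b + c = n ∨ a + b + c = 2 * n := by
    obtain ⟨c', hc'⟩ := hsumn
    have hcb : c' < 3 := by
      by_contra hcb
      push_neg at hcb
      have : 3 * n ≤ n * c' := by calc 3 * n = n * 3 := by ring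
                                     _ ≤ n * c' := Nat.mul_le_mul_left n hcb
      omega
    have hc1 : c' ≠ 0 := by rintro rfl; omega
    interval_cases c' <;> omega
  rcases hc2 with hc2 | hc2
  · have h1 : cycleDist n u v ≤ a := by rw [← hadef]; exact min_le_left _ _
    have h2 : cycleDist n v w ≤ b := by rw [← hbdef]; exact min_le_left _ _
    have h3 : cycleDist n u w ≤ c := by rw [← hcdef]; exact min_le_right _ _
    omega
  · have e1 : (u - v).val = n - a := by rw [← hadef]; exact fin_neg_val v u (Ne.symm huv)
    have e2 : (v - w).val = n - b := by rw [← hbdef]; exact fin_neg_val w v (Ne.symm hvw)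
    have e3 : (w - u).val = n - c := by rw [← hcdef]; exact fin_neg_val u w huw
    have h1 : cycleDist n u v ≤ n - a := by rw [← e1]; exact min_le_right _ _
    have h2 : cycleDist n v w ≤ n - b := by rw [← e2]; exact min_le_right _ _
    have h3 : cycleDist n u w ≤ n - c := by rw [← e3]; exact min_le_left _ _
    omega

private lemma span_ge (n : ℕ) (f : Fin n → ℕ) (a b : Fin n) : f a - f b ≤ spanOf n f :=
  le_trans (Finset.le_sup (f := fun v => f a - f v) (Finset.mem_univ b))
    (Finset.le_sup (f := fun u => Finset.univ.sup fun v => f u - f v) (Finset.mem_univ a))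

private lemma cycleDist_comm (n : ℕ) (u v : Fin n) : cycleDist n u v = cycleDist n v u :=
  min_comm _ _

private lemma pair_bound {n k : ℕ} {f : Fin n → ℕ} (hf : IsRadioLabeling n k f)
    {u v w : Fin n} (huv : u ≠ v) (hvw : v ≠ w) (huw : u ≠ w)
    (h1 : f u ≤ f v) (h2 : f v ≤ f w) :
    3 * ((k:ℤ) + 1) ≤ 2 * ((f w : ℤ) - f u) + n := by
  have A := hf u v huv
  have B := hf v w hvw
  have C := hf u w huw
  rw [abs_sub_comm, abs_of_nonneg (sub_nonneg.mpr (by exact_mod_cast h1))] at A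
  rw [abs_sub_comm, abs_of_nonneg (sub_nonneg.mpr (by exact_mod_cast h2))] at B
  rw [abs_sub_comm, abs_of_nonneg (sub_nonneg.mpr (by exact_mod_cast h1.trans h2))] at C
  have tri := cycleDist_triangle u v w huv hvw huw
  have tri' : ((cycleDist n u v : ℤ)) + (cycleDist n v w : ℤ) + (cycleDist n u w : ℤ) ≤ n := by
    exact_mod_cast tri
  linarith

private lemma lower_bound_s14 {n k Φ : ℕ} (h9 : 9 ≤ n) (hodd : n % 2 = 1)
    (hΦ : 2 * Φ + n = 3 * k + 3) {f : Fin n → ℕ} (hf : IsRadioLabeling n k f) :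
    Φ * ((n - 1) / 2) ≤ spanOf n f := by
  set σ := Tuple.sort f with hσ
  have mono := Tuple.monotone_sort f
  have hmono : ∀ p q : Fin n, p ≤ q → f (σ p) ≤ f (σ q) := fun p q hpq => mono hpq
  have hne : ∀ (p q : Fin n), p ≠ q → σ p ≠ σ q :=
    fun p q hpq hc => hpq (σ.injective hc)
  have claim : ∀ j : ℕ, (hj : 2 * j ≤ n - 1) →
      (j : ℤ) * Φ ≤ (f (σ ⟨2 * j, by omega⟩) : ℤ) - f (σ ⟨0, by omega⟩) := by
    intro j
    induction j with
    | zero => intro hj; simp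
    | succ j ih =>
      intro hj
      have hj' : 2 * j ≤ n - 1 := by omega
      have ihh := ih hj'
      have pd := pair_bound hf
        (hne ⟨2*j, by omega⟩ ⟨2*j+1, by omega⟩ (by simp [Fin.ext_iff]))
        (hne ⟨2*j+1, by omega⟩ ⟨2*j+2, by omega⟩ (by simp [Fin.ext_iff]))
        (hne ⟨2*j, by omega⟩ ⟨2*j+2, by omega⟩ (by simp [Fin.ext_iff]))
        (hmono ⟨2*j, by omega⟩ ⟨2*j+1, by omega⟩ (by simp [Fin.le_def]))
        (hmono ⟨2*j+1, by omega⟩ ⟨2*j+2, by omega⟩ (by simp [Fin.le_def]))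
      have hidx : (⟨2*(j+1), by omega⟩ : Fin n) = ⟨2*j+2, by omega⟩ := by
        apply Fin.ext; show 2*(j+1) = 2*j+2; omega
      rw [hidx]
      have hΦ' : (2*(Φ:ℤ)) + n = 3*k+3 := by exact_mod_cast hΦ
      push_cast
      push_cast at ihh
      linarith
  have hM : 2 * ((n-1)/2) ≤ n - 1 := by omega
  have main := claim ((n-1)/2) hM
  have hidx : (⟨2 * ((n-1)/2), by omega⟩ : Fin n) = ⟨n-1, by omega⟩ := by
    apply Fin.ext; show 2*((n-1)/2) = n-1; omega
  rw [hidx] at main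
  have hle : f (σ ⟨0, by omega⟩) ≤ f (σ ⟨n-1, by omega⟩) :=
    hmono _ _ (by simp [Fin.le_def])
  have hspan : f (σ ⟨n-1, by omega⟩) - f (σ ⟨0, by omega⟩) ≤ spanOf n f :=
    span_ge n f _ _
  zify [hle] at hspan
  have goal' : ((Φ * ((n-1)/2) : ℕ) : ℤ) ≤ ((spanOf n f : ℕ) : ℤ) := by
    rw [Nat.cast_mul]
    linarith [main, hspan]
  exact_mod_cast goal'

theorem stmt14 (n k h : ℕ) (hn : Odd n) (hke : Even k) (hd : n / 2 ≤ k) (hk3 : k < n - 3)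
    (hh : h = (n - k - 1) / 2) (hodd : Odd h) (hlt : h < n) (hgcd : Nat.gcd n h = 1) :
    Function.Bijective (fun i : Fin n =>
      (⟨i.val * ((n - h) / 2) % n, Nat.mod_lt _ (by omega)⟩ : Fin n)) ∧
    (∀ f : Fin n → ℕ,
      (∀ i : Fin n,
        f ⟨i.val * ((n - h) / 2) % n, Nat.mod_lt _ (by omega)⟩ = i.val * ((k + 1 - h) / 2)) →
      IsRadioLabeling n k f ∧ spanOf n f = (n - 1) * ((k + 1 - h) / 2)) ∧
    rn n k = (3 * k + 3 - n) / 2 * ((n - 1) / 2) := by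
  have hn2 : n % 2 = 1 := Nat.odd_iff.mp hn
  have hk2 : k % 2 = 0 := Nat.even_iff.mp hke
  have hh2 : h % 2 = 1 := Nat.odd_iff.mp hodd
  have hnkh : n = k + 1 + 2 * h := by omega
  have h9 : 9 ≤ n := by omega
  have hnpos : 0 < n := by omega
  -- coprimality of n with (n-h)/2
  have hcop : Nat.gcd n ((n - h) / 2) = 1 := by
    have hdn : Nat.gcd n ((n-h)/2) ∣ n := Nat.gcd_dvd_left _ _
    have hdm : Nat.gcd n ((n-h)/2) ∣ (n-h)/2 := Nat.gcd_dvd_right _ _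
    have hdnh : Nat.gcd n ((n-h)/2) ∣ n - h := by
      refine hdm.trans (Nat.div_dvd_of_dvd ?_)
      omega
    have hdh : Nat.gcd n ((n-h)/2) ∣ h := by
      have hdh' := Nat.dvd_sub hdn hdnh
      have e : n - (n - h) = h := by omega
      rwa [e] at hdh' 
    have : Nat.gcd n ((n-h)/2) ∣ 1 := hgcd ▸ Nat.dvd_gcd hdn hdh
    exact Nat.dvd_one.mp this
  -- the jump map and its bijectivity
  have hbij : Function.Bijective (fun i : Fin n =>
      (⟨i.val * ((n - h) / 2) % n, Nat.mod_lt _ (by omega)⟩ : Fin n)) := by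
    apply Finite.injective_iff_bijective.mp
    intro i j hij
    have hij' : i.val * ((n-h)/2) % n = j.val * ((n-h)/2) % n := by
      have := congrArg Fin.val hij
      simpa using this
    have hmeq : i.val ≡ j.val [MOD n] := by
      apply Nat.ModEq.cancel_right_of_coprime (c := (n-h)/2) hcop
      show i.val * ((n-h)/2) % n = j.val * ((n-h)/2) % n
      exact hij'
    have : i.val % n = j.val % n := hmeq
    rw [Nat.mod_eq_of_lt i.isLt, Nat.mod_eq_of_lt j.isLt] at this
    exact Fin.ext this
  -- Part 2
  have part2 : ∀ f : Fin n → ℕ,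
      (∀ i : Fin n,
        f ⟨i.val * ((n - h) / 2) % n, Nat.mod_lt _ (by omega)⟩ = i.val * ((k + 1 - h) / 2)) →
      IsRadioLabeling n k f ∧ spanOf n f = (n - 1) * ((k + 1 - h) / 2) := by
    intro f hfx
    have key : ∀ i j : Fin n, j.val < i.val →
        (k:ℤ) + 1 - cycleDist n
          (⟨i.val * ((n - h) / 2) % n, Nat.mod_lt _ (by omega)⟩ : Fin n)
          (⟨j.val * ((n - h) / 2) % n, Nat.mod_lt _ (by omega)⟩ : Fin n) ≤
        |(f ⟨i.val * ((n - h) / 2) % n, Nat.mod_lt _ (by omega)⟩ : ℤ) -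
          f ⟨j.val * ((n - h) / 2) % n, Nat.mod_lt _ (by omega)⟩| := by
      intro i j hji
      set Xi : Fin n := ⟨i.val * ((n - h) / 2) % n, Nat.mod_lt _ (by omega)⟩ with hXi
      set Xj : Fin n := ⟨j.val * ((n - h) / 2) % n, Nat.mod_lt _ (by omega)⟩ with hXj
      obtain ⟨t, htdef⟩ : ∃ t, i.val - j.val = t := ⟨_, rfl⟩
      have ht1 : 1 ≤ t := by omega
      have htn : t ≤ n - 1 := by have := i.isLt; omega
      have hsval : (Xi - Xj).val = t * ((n-h)/2) % n := by
        apply mod_unique (Xi - Xj).isLt (Nat.mod_lt _ (by omega))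
        calc ((Xi - Xj).val : ℤ)
            ≡ ((Xi.val : ℤ)) - (Xj.val : ℤ) [ZMOD n] := fin_sub_val_mod _ _
          _ = ((i.val * ((n-h)/2) % n : ℕ) : ℤ) - ((j.val * ((n-h)/2) % n : ℕ) : ℤ) := rfl
          _ ≡ ((i.val * ((n-h)/2) : ℕ) : ℤ) - ((j.val * ((n-h)/2) : ℕ) : ℤ) [ZMOD n] :=
              (natmod_int n _).sub (natmod_int n _)
          _ = ((t * ((n-h)/2) : ℕ) : ℤ) := by
              rw [← htdef]; push_cast [Nat.cast_sub hji.le, Nat.sub_mul]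
              rw [Nat.cast_sub (Nat.mul_le_mul_right _ hji.le)]; push_cast; ring
          _ ≡ ((t * ((n-h)/2) % n : ℕ) : ℤ) [ZMOD n] := (natmod_int n _).symm
      have hs0 : t * ((n-h)/2) % n ≠ 0 := by
        intro h0
        have hdvd : n ∣ t * ((n-h)/2) := Nat.dvd_of_mod_eq_zero h0
        have hdt : n ∣ t := Nat.Coprime.dvd_of_dvd_mul_right hcop hdvd
        have := Nat.le_of_dvd (by omega) hdt
        omega
      have hXne : Xi ≠ Xj := by
        intro hc
        have hz : (Xj - Xj).val = 0 := by
          rw [Fin.sub_def]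
          show (n - Xj.val + Xj.val) % n = 0
          rw [Nat.sub_add_cancel Xj.isLt.le, Nat.mod_self]
        rw [hc, hz] at hsval
        omega
      have hneg : (Xj - Xi).val = n - t * ((n-h)/2) % n := by
        rw [← hsval]; exact fin_neg_val _ _ hXne
      have hdist : cycleDist n Xi Xj = min (n - t * ((n-h)/2) % n) (t * ((n-h)/2) % n) := by
        show min (Xj - Xi).val (Xi - Xj).val = _
        rw [hneg, hsval]
      have hfi : f Xi = i.val * ((k+1-h)/2) := by rw [hXi]; exact hfx i
      have hfj : f Xj = j.val * ((k+1-h)/2) := by rw [hXj]; exact hfx j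
      have hmul : j.val * ((k+1-h)/2) ≤ i.val * ((k+1-h)/2) :=
        Nat.mul_le_mul_right ((k+1-h)/2) hji.le
      have habs : |(f Xi : ℤ) - f Xj| = ((t * ((k+1-h)/2) : ℕ) : ℤ) := by
        rw [hfi, hfj, ← Nat.cast_sub hmul, abs_of_nonneg (Int.natCast_nonneg _)]
        congr 1
        rw [← Nat.sub_mul, htdef]
      rw [hdist, habs]
      have hmlt : t * ((n-h)/2) % n < n := Nat.mod_lt _ (by omega)
      rcases (show t = 1 ∨ t = 2 ∨ t = 3 ∨ 4 ≤ t by omega) with rfl | rfl | rfl | h4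
      · have e : 1 * ((n-h)/2) % n = (n-h)/2 := by
          rw [one_mul]; exact Nat.mod_eq_of_lt (by omega)
        rw [e]; omega
      · have e : 2 * ((n-h)/2) % n = 2 * ((n-h)/2) := Nat.mod_eq_of_lt (by omega)
        rw [e]; omega
      · have e : 3 * ((n-h)/2) % n = 3 * ((n-h)/2) - n := by
          rw [Nat.mod_eq_sub_mod (by omega)]; exact Nat.mod_eq_of_lt (by omega)
        rw [e]; omega
      · have h41 : k + 1 ≤ 4 * ((k+1-h)/2) := by omega
        have h42 : 4 * ((k+1-h)/2) ≤ t * ((k+1-h)/2) := Nat.mul_le_mul_right _ h4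
        have h43 : (0:ℤ) ≤ ((min (n - t * ((n-h)/2) % n) (t * ((n-h)/2) % n) : ℕ) : ℤ) :=
          Int.natCast_nonneg _
        have h44 : ((k:ℕ):ℤ) + 1 ≤ ((t * ((k+1-h)/2) : ℕ):ℤ) := by
          exact_mod_cast h41.trans h42
        linarith
    constructor
    · -- radio labeling
      intro u v huv
      obtain ⟨i, rfl⟩ := hbij.2 u
      obtain ⟨j, rfl⟩ := hbij.2 v
      have hij : i ≠ j := fun hc => huv (by rw [hc])
      have hij' : i.val ≠ j.val := fun hc => hij (Fin.ext hc)
      rcases Nat.lt_or_ge j.val i.val with hlt' | hge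
      · exact key i j hlt'
      · have hlt2 : i.val < j.val := by omega
        have hk2' := key j i hlt2
        rw [cycleDist_comm, abs_sub_comm] at hk2'
        exact hk2'
    · -- span
      apply le_antisymm
      · apply Finset.sup_le
        intro u _
        apply Finset.sup_le
        intro v _
        obtain ⟨i, rfl⟩ := hbij.2 u
        have hfu := hfx i
        calc f _ - f v ≤ f _ := Nat.sub_le _ _
          _ = i.val * ((k+1-h)/2) := hfu
          _ ≤ (n-1) * ((k+1-h)/2) := Nat.mul_le_mul_right _ (by have := i.isLt; omega)
      · set A : Fin n := ⟨(n-1) * ((n - h) / 2) % n, Nat.mod_lt _ (by omega)⟩ with hA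
        set B : Fin n := ⟨0 * ((n - h) / 2) % n, Nat.mod_lt _ (by omega)⟩ with hB
        have h1 : f A = (n-1) * ((k+1-h)/2) := by
          rw [hA]; exact hfx ⟨n-1, by omega⟩
        have h0 : f B = 0 := by
          rw [hB]
          have := hfx ⟨0, by omega⟩
          simpa using this
        have hge := span_ge n f A B
        rw [h1, h0] at hge
        simpa using hge
  refine ⟨hbij, part2, ?_⟩
  -- Part 3 : the radio number
  set e : Fin n ≃ Fin n := Equiv.ofBijective _ hbij with he
  set f₀ : Fin n → ℕ := fun v => (e.symm v).val * ((k + 1 - h) / 2) with hf₀def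
  have hf₀ : ∀ i : Fin n,
      f₀ ⟨i.val * ((n - h) / 2) % n, Nat.mod_lt _ (by omega)⟩ = i.val * ((k + 1 - h) / 2) := by
    intro i
    have : (⟨i.val * ((n - h) / 2) % n, Nat.mod_lt _ (by omega)⟩ : Fin n) = e i := rfl
    rw [hf₀def]
    show (e.symm (⟨i.val * ((n - h) / 2) % n, Nat.mod_lt _ (by omega)⟩ : Fin n)).val * _ = _
    rw [this, Equiv.symm_apply_apply]
  obtain ⟨hrad, hspan⟩ := part2 f₀ hf₀
  have hmem : (n - 1) * ((k + 1 - h) / 2) ∈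
      {s | ∃ f : Fin n → ℕ, IsRadioLabeling n k f ∧ spanOf n f = s} := ⟨f₀, hrad, hspan⟩
  have hlb : ∀ s ∈ {s | ∃ f : Fin n → ℕ, IsRadioLabeling n k f ∧ spanOf n f = s},
      (3 * k + 3 - n) / 2 * ((n - 1) / 2) ≤ s := by
    rintro s ⟨g, hg, rfl⟩
    exact lower_bound_s14 h9 hn2 (by omega) hg
  have heq : (3 * k + 3 - n) / 2 * ((n - 1) / 2) = (n - 1) * ((k + 1 - h) / 2) := by
    have e1 : (3 * k + 3 - n) / 2 = 2 * ((k + 1 - h) / 2) := by omega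
    have e2 : n - 1 = 2 * ((n - 1) / 2) := by omega
    rw [e1]
    calc 2 * ((k + 1 - h) / 2) * ((n - 1) / 2)
        = 2 * ((n - 1) / 2) * ((k + 1 - h) / 2) := by ring
      _ = (n - 1) * ((k + 1 - h) / 2) := by rw [← e2]
  show sInf _ = _
  apply le_antisymm
  · rw [heq]
    exact Nat.sInf_le hmem
  · rw [heq] at hlb ⊢
    exact le_csInf ⟨_, hmem⟩ hlb
end

section
/- Suppose n is even, k odd, n/2 ≤ k < n−3, h = (n−k−1)/2, and p = gcd(n,h). Then rn_k(C_n) ≤ LB(n,k) + p − 1, where LB(n,k) = ⌈(3k+3−n)/2⌉·(n−2)/2 + k − n/2 + 1. Moreover, if n/2 ∉ ⟨h⟩ (the subgroup of Z_n generated by h), then rn_k(C_n) = LB(n,k) + ⌈p/2⌉ − 1. -/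
namespace S16

/-- circular distance of an integer, i.e. distance of `x` to `0` in `ℤ/n`. -/
def idist (n : ℕ) (x : ℤ) : ℕ := min ((x % (n:ℤ)).toNat) (n - (x % (n:ℤ)).toNat)

lemma idist_congr {n : ℕ} {x y : ℤ} (h : x % n = y % n) : idist n x = idist n y := by
  simp [idist, h]

lemma idist_eval {n : ℕ} (hn : 0 < n) (x q : ℤ) (r : ℕ) (hx : x = q * n + r) (h1 : r < n) :
    idist n x = min r (n - r) := by
  have hmod : x % n = r := by
    rw [hx, show (q * (n:ℤ) + r) = (r:ℤ) + n * q by ring, Int.add_mul_emod_self_left,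
      Int.emod_eq_of_lt (by positivity) (by exact_mod_cast h1)]
  simp [idist, hmod]

lemma idist_nonneg_lt {n : ℕ} (hn : 0 < n) (x : ℤ) :
    (x % (n:ℤ)).toNat < n := by
  have h1 : x % (n:ℤ) < n := Int.emod_lt_of_pos _ (by exact_mod_cast hn)
  omega

lemma idist_le_half {n : ℕ} (x : ℤ) : idist n x ≤ n / 2 := by
  unfold idist; omega

lemma idist_sum_le {n : ℕ} (hn : 0 < n) (x y : ℤ) :
    idist n x + idist n y + idist n (x + y) ≤ n := by
  have hnz : (n:ℤ) ≠ 0 := by exact_mod_cast hn.ne'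
  set r1 := (x % (n:ℤ)).toNat with hr1
  set r2 := (y % (n:ℤ)).toNat with hr2
  have hx : x % (n:ℤ) = (r1:ℤ) := by
    rw [hr1, Int.toNat_of_nonneg (Int.emod_nonneg _ hnz)]
  have hy : y % (n:ℤ) = (r2:ℤ) := by
    rw [hr2, Int.toNat_of_nonneg (Int.emod_nonneg _ hnz)]
  have h3 : (x + y) % (n:ℤ) = ((r1 + r2) % n : ℕ) := by
    rw [Int.add_emod, hx, hy]
    push_cast
    rfl
  have hb1 : r1 < n := idist_nonneg_lt hn x
  have hb2 : r2 < n := idist_nonneg_lt hn y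
  have hmod : (r1 + r2) % n = r1 + r2 ∨ (r1 + r2) % n = r1 + r2 - n := by
    rcases Nat.lt_or_ge (r1 + r2) n with h | h
    · left; exact Nat.mod_eq_of_lt h
    · right
      rw [Nat.mod_eq_sub_mod h, Nat.mod_eq_of_lt (by omega)]
  unfold idist
  rw [hx, hy, h3]
  simp only [Int.toNat_natCast]
  omega

lemma cycleDist_eq {n : ℕ} (hn : 0 < n) (u v : Fin n) :
    cycleDist n u v = idist n ((v.val : ℤ) - u.val) := by
  have key : ∀ a b : Fin n, (a - b).val = (((a.val : ℤ) - b.val) % n).toNat := by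
    intro a b
    have h1 : (a - b).val = (n - b.val + a.val) % n := by
      rw [Fin.sub_def]
    have h2 : ((a.val : ℤ) - b.val) % n = (((n - b.val + a.val) % n : ℕ) : ℤ) := by
      push_cast [Nat.cast_sub b.isLt.le]
      rw [show ((a.val:ℤ) - b.val) = ((n:ℤ) - b.val + a.val) + n * (-1) by ring,
        Int.add_mul_emod_self_left]
    rw [h1, h2, Int.toNat_natCast]

  have hvu := key v u
  have huv := key u v
  unfold cycleDist idist
  rw [hvu, huv]
  -- now relate ((u-v)%n).toNat with n - ((v-u)%n).toNat
  have hnz : (n:ℤ) ≠ 0 := by exact_mod_cast hn.ne'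
  set r := (((v.val:ℤ) - u.val) % n).toNat with hrdef
  have hr : ((v.val:ℤ) - u.val) % n = (r:ℤ) :=
    (Int.toNat_of_nonneg (Int.emod_nonneg _ hnz)).symm
  have hrlt : r < n := idist_nonneg_lt hn _
  have hx := Int.mul_ediv_add_emod ((v.val:ℤ) - u.val) n
  rcases Nat.eq_zero_or_pos r with h0 | hpos
  · have huv0 : ((u.val:ℤ) - v.val) % n = 0 := by
      have : ((u.val:ℤ) - v.val) = 0 + (n:ℤ) * (-(((v.val:ℤ) - u.val) / n)) := by
        rw [hr, h0] at hx; push_cast at hx ⊢; linarith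
      rw [this, Int.add_mul_emod_self_left]
      simp
    rw [huv0, h0]
    simp
  · have huv : ((u.val:ℤ) - v.val) % n = ((n - r : ℕ) : ℤ) := by
      have : ((u.val:ℤ) - v.val) = ((n - r : ℕ) : ℤ) + (n:ℤ) * (-(((v.val:ℤ) - u.val) / n) - 1) := by
        rw [hr] at hx
        push_cast [Nat.cast_sub hrlt.le] at hx ⊢
        linarith
      rw [this, Int.add_mul_emod_self_left, Int.emod_eq_of_lt (by positivity)
        (by push_cast [Nat.cast_sub hrlt.le]; omega)]
    rw [huv, Int.toNat_natCast]

lemma cycleDist_symm {n : ℕ} (u v : Fin n) : cycleDist n u v = cycleDist n v u := by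
  unfold cycleDist; omega

/-- vertex from an integer -/
def vtx (n : ℕ) (hn : 0 < n) (x : ℤ) : Fin n := ⟨(x % (n:ℤ)).toNat, idist_nonneg_lt hn x⟩

lemma vtx_val_mod {n : ℕ} (hn : 0 < n) (x : ℤ) : ((vtx n hn x).val : ℤ) % n = x % n := by
  have hnz : (n:ℤ) ≠ 0 := by exact_mod_cast hn.ne'
  simp only [vtx, Int.toNat_of_nonneg (Int.emod_nonneg x hnz)]
  exact Int.emod_emod_of_dvd _ dvd_rfl

lemma cycleDist_vtx {n : ℕ} (hn : 0 < n) (x y : ℤ) :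
    cycleDist n (vtx n hn x) (vtx n hn y) = idist n (y - x) := by
  rw [cycleDist_eq hn]
  apply idist_congr
  rw [Int.sub_emod, vtx_val_mod hn, vtx_val_mod hn, ← Int.sub_emod]

lemma vtx_inj_iff {n : ℕ} (hn : 0 < n) (x y : ℤ) :
    vtx n hn x = vtx n hn y ↔ x % n = y % n := by
  constructor
  · intro h
    have := congrArg (fun t : Fin n => ((t.val : ℤ) % n)) h
    simpa [vtx_val_mod hn] using this
  · intro h
    apply Fin.ext
    simp [vtx, h]

/-! ### Construction machinery -/

/-- scaled label profile within a block -/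
def Lam (a1 B1 s : ℕ) : ℕ := ((s+1)/2)*a1 + (s/2)*B1

lemma Lam_step (a1 B1 s : ℕ) :
    Lam a1 B1 (s+1) = Lam a1 B1 s + (if s % 2 = 0 then a1 else B1) := by
  rcases Nat.even_or_odd s with ⟨j, rfl⟩ | ⟨j, rfl⟩
  · simp only [Nat.mul_mod_right, if_pos, Lam]
    have e1 : (j + j + 1 + 1)/2 = j + 1 := by omega
    have e2 : (j + j + 1)/2 = j := by omega
    have e3 : (j + j)/2 = j := by omega
    rw [e1, e2, e3]
    have : (j+j) % 2 = 0 := by omega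
    rw [this]
    simp
    ring
  · have hodd : (2*j+1) % 2 = 1 := by omega
    simp only [Lam, hodd]
    have e1 : (2*j + 1 + 1 + 1)/2 = j + 1 := by omega
    have e2 : (2*j + 1 + 1)/2 = j + 1 := by omega
    have e3 : (2*j + 1)/2 = j := by omega
    rw [e1, e2, e3]
    simp
    ring

/-- scaled position profile within a block -/
def Yf (m1 ht s : ℕ) : ℤ := ((s % 2 : ℕ) : ℤ) * (m1:ℤ) - ((s / 2 : ℕ) : ℤ) * (ht:ℤ)

lemma Yf_step (m1 ht s : ℕ) :
    Yf m1 ht (s+1) = Yf m1 ht s + (if s % 2 = 0 then (m1:ℤ) else -(m1:ℤ) - ht) := by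
  rcases Nat.even_or_odd s with ⟨j, rfl⟩ | ⟨j, rfl⟩
  · have h1 : (j + j) % 2 = 0 := by omega
    have h2 : (j + j + 1) % 2 = 1 := by omega
    have e1 : (j + j + 1)/2 = j := by omega
    have e2 : (j + j)/2 = j := by omega
    simp only [Yf, h1, h2, e1, e2, if_pos]
    push_cast
    ring
  · have h1 : (2*j+1) % 2 = 1 := by omega
    have h2 : (2*j+1+1) % 2 = 0 := by omega
    have e1 : (2*j+1+1)/2 = j+1 := by omega
    have e2 : (2*j+1)/2 = j := by omega
    simp only [Yf, h1, h2, e1, e2]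
    simp only [if_neg (by omega : ¬ (1:ℕ) = 0)]
    push_cast
    ring

/-- label function -/
def LL (n1 P γ a1 B1 t : ℕ) : ℕ := (t / n1) * P + γ * Lam a1 B1 (t % n1)

/-- integer position function -/
def XIf (n1 γ m1 ht t : ℕ) : ℤ :=
  ((t / n1 : ℕ) : ℤ) + (γ:ℤ) * (Yf m1 ht (t % n1) + ((t / n1 : ℕ):ℤ) * ((ht:ℤ) * (2 - (m1:ℤ))))

lemma LL_decomp (n1 P γ a1 B1 c s : ℕ) (hn1 : 0 < n1) (hs : s < n1) :
    LL n1 P γ a1 B1 (c*n1+s) = c * P + γ * Lam a1 B1 s := by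
  unfold LL
  rw [Nat.mul_comm c n1, Nat.mul_add_div hn1, Nat.mul_add_mod, Nat.div_eq_of_lt hs,
    Nat.mod_eq_of_lt hs, Nat.add_zero]

lemma XIf_decomp (n1 γ m1 ht c s : ℕ) (hn1 : 0 < n1) (hs : s < n1) :
    XIf n1 γ m1 ht (c*n1+s)
      = (c:ℤ) + (γ:ℤ) * (Yf m1 ht s + (c:ℤ) * ((ht:ℤ) * (2 - (m1:ℤ)))) := by
  unfold XIf
  rw [Nat.mul_comm c n1, Nat.mul_add_div hn1, Nat.mul_add_mod, Nat.div_eq_of_lt hs,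
    Nat.mod_eq_of_lt hs, Nat.add_zero]

lemma constructionMain (n k γ ht a1 : ℕ) (hγ : 0 < γ) (hht : 0 < ht) (ha1 : 0 < a1)
    (hn : n = γ * (2 * (2 * ht + a1)))
    (hk : k + 1 = 2 * γ * (ht + a1))
    (hinjE : ∀ d : ℕ, 0 < d → d < 2*ht + a1 → ¬ ((4*ht + 2*a1) ∣ d * ht))
    (hinjO : ∀ d : ℤ, d.natAbs < 2*ht + a1 →
      ¬ (((4*ht + 2*a1 : ℕ) : ℤ) ∣ d * (ht:ℤ) - ((2*ht + a1 : ℕ) : ℤ))) :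
    ∃ f : Fin n → ℕ, IsRadioLabeling n k f ∧
      spanOf n f = (γ*(2*ht+a1)) * (γ*a1) + (γ*(2*ht+a1) - 1) * (γ*(ht+a1)) + (γ - 1) := by
  have hm1pos : 0 < 2*ht + a1 := by omega
  set m1 := 2*ht + a1 with hm1def
  set B1 := ht + a1 with hB1def
  set n1 := 2*m1 with hn1def
  have hn1pos : 0 < n1 := by omega
  have hn' : n = γ * n1 := by rw [hn, hn1def, hm1def]
  have hnpos : 0 < n := by rw [hn']; positivity
  set A := γ * a1 with hAdef
  set Bb := γ * B1 with hBbdef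
  set H := γ * ht with hHdef
  set M := γ * m1 with hMdef
  have hMsum : M = 2*H + A := by rw [hMdef, hHdef, hAdef, hm1def]; ring
  have hBbsum : Bb = H + A := by rw [hBbdef, hHdef, hAdef, hB1def]; ring
  have hn2 : n = 2 * M := by rw [hn', hMdef, hn1def]; ring
  have hk2 : k + 1 = 2 * Bb := by rw [hk, hBbdef, hB1def]; ring
  have hApos : 0 < A := by positivity
  have hHpos : 0 < H := by positivity
  -- values of Lam and Yf
  have hLe : ∀ j, Lam a1 B1 (2*j) = j*a1 + j*B1 := by
    intro j; unfold Lam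
    rw [show (2*j+1)/2 = j by omega, show (2*j)/2 = j by omega]
  have hLo : ∀ j, Lam a1 B1 (2*j+1) = (j+1)*a1 + j*B1 := by
    intro j; unfold Lam
    rw [show (2*j+1+1)/2 = j+1 by omega, show (2*j+1)/2 = j by omega]
  have hYe : ∀ j, Yf m1 ht (2*j) = -((j:ℤ)*ht) := by
    intro j; unfold Yf
    rw [show (2*j) % 2 = 0 by omega, show (2*j)/2 = j by omega]
    push_cast; ring
  have hYo : ∀ j, Yf m1 ht (2*j+1) = (m1:ℤ) - (j:ℤ)*ht := by
    intro j; unfold Yf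
    rw [show (2*j+1) % 2 = 1 by omega, show (2*j+1)/2 = j by omega]
    push_cast; ring
  set P := γ * Lam a1 B1 (n1 - 1) + (γ*B1 + 1) with hPdef
  set L : ℕ → ℕ := LL n1 P γ a1 B1 with hLdef
  set XI : ℕ → ℤ := XIf n1 γ m1 ht with hXIdef
  have hLpair : ∀ c s, s < n1 → L (c*n1 + s) = c * P + γ * Lam a1 B1 s := by
    intro c s hs; rw [hLdef]; exact LL_decomp _ _ _ _ _ _ _ hn1pos hs
  have hXpair : ∀ c s, s < n1 →
      XI (c*n1 + s) = (c:ℤ) + (γ:ℤ) * (Yf m1 ht s + (c:ℤ) * ((ht:ℤ) * (2 - (m1:ℤ)))) := by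
    intro c s hs; rw [hXIdef]; exact XIf_decomp _ _ _ _ _ _ hn1pos hs
  have hdecomp : ∀ t : ℕ, ∃ c s, t = c*n1 + s ∧ s < n1 ∧ c = t / n1 := by
    intro t
    exact ⟨t / n1, t % n1, (Nat.div_add_mod' t n1).symm, Nat.mod_lt _ hn1pos, rfl⟩
  have hLam0 : Lam a1 B1 0 = 0 := by unfold Lam; norm_num
  have hLamLast : Lam a1 B1 (n1 - 1) = m1 * a1 + (m1 - 1) * B1 := by
    rw [show n1 - 1 = 2*(m1-1)+1 by omega, hLo (m1-1)]
    have : m1 - 1 + 1 = m1 := by omega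
    rw [this]
  -- gap lower bound
  have hgapLB : ∀ t : ℕ, L t + (if t % 2 = 0 then A else Bb) ≤ L (t+1) := by
    intro t
    obtain ⟨c, s, rfl, hs, -⟩ := hdecomp t
    have hpar : (c*n1 + s) % 2 = s % 2 := by
      obtain ⟨w, hw⟩ : 2 ∣ c * n1 := ⟨c * m1, by rw [hn1def]; ring⟩
      omega
    rw [hpar]
    rcases Nat.lt_or_ge (s+1) n1 with hlt | hge
    · rw [show c*n1 + s + 1 = c*n1 + (s+1) by omega, hLpair c s hs, hLpair c (s+1) hlt,
        Lam_step]
      have hmuldist : γ * (Lam a1 B1 s + (if s % 2 = 0 then a1 else B1))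
          = γ * Lam a1 B1 s + (if s % 2 = 0 then A else Bb) := by
        by_cases h0 : s % 2 = 0
        · simp only [if_pos h0, hAdef]; ring
        · simp only [if_neg h0, hBbdef]; ring
      rw [hmuldist]
      omega
    · have hs1 : s = n1 - 1 := by omega
      have hcn : (c+1)*n1 = c*n1 + n1 := by ring
      rw [show c*n1 + s + 1 = (c+1)*n1 + 0 by omega, hLpair (c+1) 0 hn1pos, hLpair c s hs,
        hLam0]
      rw [if_neg (by omega : ¬ s % 2 = 0)]
      have hPval : (c+1) * P = c * P + γ * Lam a1 B1 (n1-1) + (γ*B1 + 1) := by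
        rw [hPdef]; ring
      rw [hPval, ← hs1]
      have : Bb = γ * B1 := hBbdef
      omega
  have hstep : ∀ u : ℕ, L u ≤ L (u+1) := by
    intro u
    have h2 := hgapLB u
    rcases Nat.even_or_odd u with he | ho
    · rw [if_pos (Nat.even_iff.mp he)] at h2; omega
    · rw [if_neg (by rw [Nat.odd_iff.mp ho]; omega)] at h2; omega
  have hmono : ∀ t t' : ℕ, t ≤ t' → L t ≤ L t' := by
    intro t t' hle
    induction t' with
    | zero => rw [Nat.le_zero.mp hle]
    | succ u ih =>
      rcases Nat.lt_or_ge t (u+1) with hlt | hge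
      · exact le_trans (ih (by omega)) (hstep u)
      · rw [show t = u+1 by omega]
  have hwin : ∀ t : ℕ, L t + (k+1) ≤ L (t+4) := by
    intro t
    have g0 := hgapLB t
    have g1 := hgapLB (t+1)
    have g2 := hgapLB (t+2)
    have g3 := hgapLB (t+3)
    rw [show t+1+1 = t+2 by omega] at g1
    rw [show t+2+1 = t+3 by omega] at g2
    rw [show t+3+1 = t+4 by omega] at g3
    rcases Nat.even_or_odd t with he | ho
    · have e0 : t % 2 = 0 := Nat.even_iff.mp he
      rw [if_pos e0] at g0
      rw [if_neg (by omega : ¬ (t+1) % 2 = 0)] at g1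
      rw [if_pos (by omega : (t+2) % 2 = 0)] at g2
      rw [if_neg (by omega : ¬ (t+3) % 2 = 0)] at g3
      omega
    · have e0 : t % 2 = 1 := Nat.odd_iff.mp ho
      rw [if_neg (by omega : ¬ t % 2 = 0)] at g0
      rw [if_pos (by omega : (t+1) % 2 = 0)] at g1
      rw [if_neg (by omega : ¬ (t+2) % 2 = 0)] at g2
      rw [if_pos (by omega : (t+3) % 2 = 0)] at g3
      omega
  -- distance evaluations
  have hm1le : 1 ≤ m1 := by omega
  have hHM : H + 2 ≤ M := by omega
  have idm : idist n ((M:ℕ):ℤ) = M := by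
    rw [idist_eval hnpos _ 0 M (by push_cast; ring) (by omega)]; omega
  have idmh : idist n (-((M:ℕ):ℤ) - ((H:ℕ):ℤ)) = M - H := by
    rw [idist_eval hnpos _ (-1) (M - H) (by push_cast [Nat.cast_sub (by omega : H ≤ M)]; omega)
      (by omega)]
    omega
  have idh : idist n (-((H:ℕ):ℤ)) = H := by
    rw [idist_eval hnpos _ (-1) (n - H) (by push_cast [Nat.cast_sub (by omega : H ≤ n)]; omega)
      (by omega)]
    omega
  have idMHsub : idist n (((M:ℕ):ℤ) - ((H:ℕ):ℤ)) = M - H := by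
    rw [idist_eval hnpos _ 0 (M - H) (by push_cast [Nat.cast_sub (by omega : H ≤ M)]; omega)
      (by omega)]
    omega
  have idc1 : idist n (1 + ((H:ℕ):ℤ) - ((M:ℕ):ℤ)) = M - H - 1 := by
    rw [idist_eval hnpos _ (-1) (M + H + 1) (by push_cast; omega) (by omega)]
    omega
  have idc2 : idist n (1 + ((H:ℕ):ℤ)) = H + 1 := by
    rw [idist_eval hnpos _ 0 (H + 1) (by push_cast; ring) (by omega)]
    omega
  have idc3 : idist n (1 + ((M:ℕ):ℤ) + ((H:ℕ):ℤ)) = M - H - 1 := by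
    rw [idist_eval hnpos _ 0 (M + H + 1) (by push_cast; ring) (by omega)]
    omega
  -- main pair inequality
  have hpair : ∀ t e : ℕ, 1 ≤ e → e ≤ 3 → t + e < n →
      (k:ℤ) + 1 ≤ ((L (t+e) : ℤ) - L t) + idist n (XI (t+e) - XI t) := by
    intro t e he1 he3 hlt
    obtain ⟨c, s, rfl, hs, -⟩ := hdecomp t
    rcases Nat.lt_or_ge (s + e) n1 with hsb | hcross
    · -- same block
      rw [show c*n1 + s + e = c*n1 + (s+e) by omega]
      obtain ⟨j, hj | hj⟩ := Nat.even_or_odd' s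
      · subst hj
        interval_cases e
        · have hdL : (L (c*n1 + (2*j+1)) : ℤ) - L (c*n1 + (2*j)) = (A:ℤ) := by
            rw [hLpair c _ (by omega : 2*j+1 < n1), hLpair c _ hs, hLo j, hLe j, hAdef]
            push_cast; ring
          have hdX : XI (c*n1 + (2*j+1)) - XI (c*n1 + (2*j)) = ((M:ℕ):ℤ) := by
            rw [hXpair c _ (by omega : 2*j+1 < n1), hXpair c _ hs, hYo j, hYe j, hMdef]
            push_cast; ring
          rw [show (2:ℕ)*j + 1 = 2*j+1 from rfl] at hsb
          rw [hdL, hdX, idm]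
          omega
        · have e2 : 2*j + 2 = 2*(j+1) := by ring
          have hdL : (L (c*n1 + (2*j+2)) : ℤ) - L (c*n1 + (2*j)) = (A:ℤ) + (Bb:ℕ) := by
            rw [hLpair c _ (by omega : 2*j+2 < n1), hLpair c _ hs, e2, hLe (j+1), hLe j,
              hAdef, hBbdef]
            push_cast; ring
          have hdX : XI (c*n1 + (2*j+2)) - XI (c*n1 + (2*j)) = -((H:ℕ):ℤ) := by
            rw [hXpair c _ (by omega : 2*j+2 < n1), hXpair c _ hs, e2, hYe (j+1), hYe j, hHdef]
            push_cast; ring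
          rw [hdL, hdX, idh]
          omega
        · have hdL : (L (c*n1 + (2*j+3)) : ℤ) - L (c*n1 + (2*j)) = 2*(A:ℤ) + (Bb:ℕ) := by
            rw [hLpair c _ (by omega : 2*j+3 < n1), hLpair c _ hs,
              show 2*j+3 = 2*(j+1)+1 by ring, hLo (j+1), hLe j, hAdef, hBbdef]
            push_cast; ring
          have hdX : XI (c*n1 + (2*j+3)) - XI (c*n1 + (2*j)) = ((M:ℕ):ℤ) - ((H:ℕ):ℤ) := by
            rw [hXpair c _ (by omega : 2*j+3 < n1), hXpair c _ hs,
              show 2*j+3 = 2*(j+1)+1 by ring, hYo (j+1), hYe j, hMdef, hHdef]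
            push_cast; ring
          rw [hdL, hdX, idMHsub]
          omega
      · subst hj
        interval_cases e
        · have hdL : (L (c*n1 + (2*j+1+1)) : ℤ) - L (c*n1 + (2*j+1)) = ((Bb:ℕ):ℤ) := by
            rw [hLpair c _ (by omega : 2*j+1+1 < n1), hLpair c _ hs,
              show 2*j+1+1 = 2*(j+1) by ring, hLe (j+1), hLo j, hBbdef]
            push_cast; ring
          have hdX : XI (c*n1 + (2*j+1+1)) - XI (c*n1 + (2*j+1)) = -((M:ℕ):ℤ) - ((H:ℕ):ℤ) := by
            rw [hXpair c _ (by omega : 2*j+1+1 < n1), hXpair c _ hs,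
              show 2*j+1+1 = 2*(j+1) by ring, hYe (j+1), hYo j, hMdef, hHdef]
            push_cast; ring
          rw [hdL, hdX, idmh]
          omega
        · have hdL : (L (c*n1 + (2*j+1+2)) : ℤ) - L (c*n1 + (2*j+1)) = (A:ℤ) + (Bb:ℕ) := by
            rw [hLpair c _ (by omega : 2*j+1+2 < n1), hLpair c _ hs,
              show 2*j+1+2 = 2*(j+1)+1 by ring, hLo (j+1), hLo j, hAdef, hBbdef]
            push_cast; ring
          have hdX : XI (c*n1 + (2*j+1+2)) - XI (c*n1 + (2*j+1)) = -((H:ℕ):ℤ) := by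
            rw [hXpair c _ (by omega : 2*j+1+2 < n1), hXpair c _ hs,
              show 2*j+1+2 = 2*(j+1)+1 by ring, hYo (j+1), hYo j, hHdef]
            push_cast; ring
          rw [hdL, hdX, idh]
          omega
        · have hdL : (L (c*n1 + (2*j+1+3)) : ℤ) - L (c*n1 + (2*j+1)) = (A:ℤ) + 2*((Bb:ℕ):ℤ) := by
            rw [hLpair c _ (by omega : 2*j+1+3 < n1), hLpair c _ hs,
              show 2*j+1+3 = 2*(j+2) by ring, hLe (j+2), hLo j, hAdef, hBbdef]
            push_cast; ring
          rw [hdL]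
          omega
    · -- crossing a block boundary
      have hcc : (c+1)*n1 = c*n1 + n1 := by ring
      interval_cases e
      · have hseq : s = n1 - 1 := by omega
        subst hseq
        rw [show c*n1 + (n1-1) + 1 = (c+1)*n1 + 0 by omega]
        have hdL : (L ((c+1)*n1 + 0) : ℤ) - L (c*n1 + (n1-1)) = ((Bb:ℕ):ℤ) + 1 := by
          rw [hLpair (c+1) 0 hn1pos, hLpair c _ hs, hLam0, hPdef, hBbdef]
          push_cast; ring
        have hdX : XI ((c+1)*n1 + 0) - XI (c*n1 + (n1-1)) = 1 + ((H:ℕ):ℤ) - ((M:ℕ):ℤ) := by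
          rw [hXpair (c+1) 0 hn1pos, hXpair c _ hs,
            show n1 - 1 = 2*(m1-1)+1 by omega, hYo (m1-1),
            show (0:ℕ) = 2*0 by rfl, hYe 0, hMdef, hHdef]
          push_cast [Nat.cast_sub hm1le]
          ring
        rw [hdL, hdX, idc1]
        omega
      · rcases (show s = n1 - 2 ∨ s = n1 - 1 by omega) with hseq | hseq
        · subst hseq
          rw [show c*n1 + (n1-2) + 2 = (c+1)*n1 + 0 by omega]
          have hdL : (L ((c+1)*n1 + 0) : ℤ) - L (c*n1 + (n1-2)) = (A:ℤ) + (Bb:ℕ) + 1 := by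
            rw [hLpair (c+1) 0 hn1pos, hLpair c _ hs, hLam0, hPdef, hBbdef, hAdef,
              hLamLast, show n1 - 2 = 2*(m1-1) by omega, hLe (m1-1)]
            push_cast [Nat.cast_sub hm1le]
            ring
          have hdX : XI ((c+1)*n1 + 0) - XI (c*n1 + (n1-2)) = 1 + ((H:ℕ):ℤ) := by
            rw [hXpair (c+1) 0 hn1pos, hXpair c _ hs,
              show n1 - 2 = 2*(m1-1) by omega, hYe (m1-1),
              show (0:ℕ) = 2*0 by rfl, hYe 0, hHdef]
            push_cast [Nat.cast_sub hm1le]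
            ring
          rw [hdL, hdX, idc2]
          omega
        · subst hseq
          rw [show c*n1 + (n1-1) + 2 = (c+1)*n1 + 1 by omega]
          have hdL : (L ((c+1)*n1 + 1) : ℤ) - L (c*n1 + (n1-1)) = (A:ℤ) + (Bb:ℕ) + 1 := by
            rw [hLpair (c+1) 1 (by omega), hLpair c _ hs, hPdef, hBbdef, hAdef,
              show (1:ℕ) = 2*0+1 by rfl, hLo 0]
            push_cast
            ring
          have hdX : XI ((c+1)*n1 + 1) - XI (c*n1 + (n1-1)) = 1 + ((H:ℕ):ℤ) := by
            rw [hXpair (c+1) 1 (by omega), hXpair c _ hs,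
              show n1 - 1 = 2*(m1-1)+1 by omega, hYo (m1-1),
              show (1:ℕ) = 2*0+1 by rfl, hYo 0, hHdef]
            push_cast [Nat.cast_sub hm1le]
            ring
          rw [hdL, hdX, idc2]
          omega
      · rcases (show s = n1 - 3 ∨ s = n1 - 2 ∨ s = n1 - 1 by omega) with hseq | hseq | hseq
        · subst hseq
          rw [show c*n1 + (n1-3) + 3 = (c+1)*n1 + 0 by omega]
          have hdL : (L ((c+1)*n1 + 0) : ℤ) - L (c*n1 + (n1-3)) = (A:ℤ) + 2*((Bb:ℕ):ℤ) + 1 := by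
            rw [hLpair (c+1) 0 hn1pos, hLpair c _ hs, hLam0, hPdef, hBbdef, hAdef,
              hLamLast, show n1 - 3 = 2*(m1-2)+1 by omega, hLo (m1-2)]
            push_cast [Nat.cast_sub hm1le, Nat.cast_sub (by omega : 2 ≤ m1)]
            ring
          rw [hdL]
          omega
        · subst hseq
          rw [show c*n1 + (n1-2) + 3 = (c+1)*n1 + 1 by omega]
          have hdL : (L ((c+1)*n1 + 1) : ℤ) - L (c*n1 + (n1-2)) = 2*(A:ℤ) + (Bb:ℕ) + 1 := by
            rw [hLpair (c+1) 1 (by omega), hLpair c _ hs, hPdef, hBbdef, hAdef,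
              hLamLast, show n1 - 2 = 2*(m1-1) by omega, hLe (m1-1),
              show (1:ℕ) = 2*0+1 by rfl, hLo 0]
            push_cast [Nat.cast_sub hm1le]
            ring
          have hdX : XI ((c+1)*n1 + 1) - XI (c*n1 + (n1-2)) = 1 + ((M:ℕ):ℤ) + ((H:ℕ):ℤ) := by
            rw [hXpair (c+1) 1 (by omega), hXpair c _ hs,
              show n1 - 2 = 2*(m1-1) by omega, hYe (m1-1),
              show (1:ℕ) = 2*0+1 by rfl, hYo 0, hMdef, hHdef]
            push_cast [Nat.cast_sub hm1le]
            ring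
          rw [hdL, hdX, idc3]
          omega
        · subst hseq
          rw [show c*n1 + (n1-1) + 3 = (c+1)*n1 + 2 by omega]
          have hdL : (L ((c+1)*n1 + 2) : ℤ) - L (c*n1 + (n1-1)) = (A:ℤ) + 2*((Bb:ℕ):ℤ) + 1 := by
            rw [hLpair (c+1) 2 (by omega), hLpair c _ hs, hPdef, hBbdef, hAdef,
              show (2:ℕ) = 2*1 by rfl, hLe 1]
            push_cast
            ring
          rw [hdL]
          omega
  -- injectivity
  have hn1e : n1 = 4*ht + 2*a1 := by omega
  have hYinj : ∀ s s' : ℕ, s < n1 → s' < n1 →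
      ((n1:ℕ):ℤ) ∣ (Yf m1 ht s' - Yf m1 ht s) → s' = s := by
    have habs : ∀ z : ℤ, ((n1:ℕ):ℤ) ∣ z → n1 ∣ z.natAbs := by
      intro z hz
      have := Int.natAbs_dvd_natAbs.mpr hz
      simpa using this
    have heven : ∀ j j' : ℕ, j < m1 → j' < m1 →
        ((n1:ℕ):ℤ) ∣ (((j:ℤ) - j') * ht) → j = j' := by
      intro j j' hj hj' hdvd
      by_contra hne
      have h1 := habs _ hdvd
      rw [Int.natAbs_mul, Int.natAbs_natCast] at h1
      have h2 : ((j:ℤ) - j').natAbs < m1 := by omega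
      have h3 : 0 < ((j:ℤ) - j').natAbs := by omega
      exact hinjE _ h3 (by omega) (by rw [← hn1e]; exact h1)
    have hodd : ∀ j j' : ℕ, j < m1 → j' < m1 →
        ¬ ((n1:ℕ):ℤ) ∣ (((j:ℤ) - j') * ht - m1) := by
      intro j j' hj hj' hdvd
      refine hinjO ((j:ℤ) - j') (by omega) ?_
      rw [← hn1e]
      exact hdvd
    intro s s' hs hs' hdvd
    obtain ⟨j, hj | hj⟩ := Nat.even_or_odd' s <;>
      obtain ⟨j', hj' | hj'⟩ := Nat.even_or_odd' s' <;> subst hj <;> subst hj'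
    · rw [hYe j, hYe j'] at hdvd
      have := heven j j' (by omega) (by omega)
        (by convert hdvd using 1; push_cast; ring)
      omega
    · rw [hYe j, hYo j'] at hdvd
      exact absurd (by convert dvd_neg.mpr hdvd using 1; rfl; push_cast; ring)
        (hodd j' j (by omega) (by omega))
    · rw [hYo j, hYe j'] at hdvd
      exact absurd (by convert hdvd using 1; push_cast; ring)
        (hodd j j' (by omega) (by omega))
    · rw [hYo j, hYo j'] at hdvd
      have := heven j j' (by omega) (by omega)
        (by convert hdvd using 1; push_cast; ring)
      omega
  have hinj : ∀ t t' : ℕ, t < n → t' < n → XI t % n = XI t' % n → t = t' := by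
    intro t t' ht1 ht2 hmod
    obtain ⟨c, s, rfl, hs, -⟩ := hdecomp t
    obtain ⟨c', s', rfl, hs', -⟩ := hdecomp t'
    have hdvd : ((n:ℕ):ℤ) ∣ (XI (c'*n1 + s') - XI (c*n1+s)) := by
      rw [Int.dvd_iff_emod_eq_zero, Int.sub_emod, hmod, sub_self, Int.zero_emod]
    rw [hXpair c s hs, hXpair c' s' hs'] at hdvd
    have hcγ : c < γ := by
      by_contra hcon
      have := Nat.mul_le_mul_right n1 (by omega : γ ≤ c)
      omega
    have hc'γ : c' < γ := by
      by_contra hcon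
      have := Nat.mul_le_mul_right n1 (by omega : γ ≤ c')
      omega
    have hγn : ((γ:ℕ):ℤ) ∣ (n:ℤ) := by
      refine ⟨(n1:ℕ), ?_⟩
      exact_mod_cast hn'
    have hγdvd : ((γ:ℕ):ℤ) ∣ ((c':ℤ) - c) := by
      have h2 : ((γ:ℕ):ℤ) ∣ ((γ:ℤ) * (Yf m1 ht s' + (c':ℤ) * ((ht:ℤ) * (2 - (m1:ℤ))))
          - (γ:ℤ) * (Yf m1 ht s + (c:ℤ) * ((ht:ℤ) * (2 - (m1:ℤ))))) := by
        exact Dvd.dvd.sub (Dvd.intro _ rfl) (Dvd.intro _ rfl)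
      have h3 := (hγn.trans hdvd).sub h2
      convert h3 using 1
      rfl
      ring
    have hceq : (c':ℤ) - c = 0 := by
      refine Int.eq_zero_of_abs_lt_dvd hγdvd ?_
      rw [abs_lt]
      refine ⟨by push_cast; omega, by push_cast; omega⟩
    have hcc : c = c' := by omega
    subst hcc
    have hdvd2 : ((n:ℕ):ℤ) ∣ (γ:ℤ) * (Yf m1 ht s' - Yf m1 ht s) := by
      convert hdvd using 1
      ring
    have hdvd3 : ((n1:ℕ):ℤ) ∣ (Yf m1 ht s' - Yf m1 ht s) := by
      rcases hdvd2 with ⟨w, hw⟩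
      refine ⟨w, ?_⟩
      have hγz : ((γ:ℕ):ℤ) ≠ 0 := by exact_mod_cast hγ.ne'
      apply mul_left_cancel₀ hγz
      rw [hw, show ((n:ℕ):ℤ) = ((γ:ℕ):ℤ) * n1 by exact_mod_cast congrArg (Nat.cast : ℕ → ℤ) hn']
      ring
    have := hYinj s s' hs hs' hdvd3
    omega
  -- assembly
  have hbij : Function.Bijective (fun t : Fin n => vtx n hnpos (XI t.val)) := by
    have hinj' : Function.Injective (fun t : Fin n => vtx n hnpos (XI t.val)) := by
      intro t t' hv
      have := (vtx_inj_iff hnpos _ _).mp hv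
      exact Fin.ext (hinj t.val t'.val t.isLt t'.isLt this)
    exact Finite.injective_iff_bijective.mp hinj'
  set eq := Equiv.ofBijective _ hbij with heqdef
  have heqapp : ∀ i : Fin n, eq i = vtx n hnpos (XI i.val) := fun _ => rfl
  refine ⟨fun v => L (eq.symm v).val, ?_, ?_⟩
  · -- radio labeling
    have main : ∀ a b : Fin n, (eq.symm a).val < (eq.symm b).val →
        (k:ℤ) + 1 - cycleDist n a b ≤ |(L (eq.symm a).val : ℤ) - L (eq.symm b).val| := by
      intro a b hab
      set i := eq.symm a with hidef
      set j := eq.symm b with hjdef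
      have ha : a = vtx n hnpos (XI i.val) := by rw [hidef, ← heqapp, Equiv.apply_symm_apply]
      have hb : b = vtx n hnpos (XI j.val) := by rw [hjdef, ← heqapp, Equiv.apply_symm_apply]
      have hmle : L i.val ≤ L j.val := hmono _ _ (le_of_lt hab)
      have habs2 : |(L i.val : ℤ) - L j.val| = (L j.val : ℤ) - L i.val := by
        rw [abs_sub_comm]
        exact abs_of_nonneg (by omega)
      rw [ha, hb, cycleDist_vtx hnpos, habs2]
      rcases Nat.lt_or_ge (j.val - i.val) 4 with hsmall | hbig
      · have h1 := hpair i.val (j.val - i.val) (by omega) (by omega) (by omega)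
        rw [show i.val + (j.val - i.val) = j.val by omega] at h1
        omega
      · have h1 := hwin i.val
        have h2 := hmono (i.val + 4) j.val (by omega)
        have h3 : (0:ℤ) ≤ (idist n (XI j.val - XI i.val) : ℤ) := Int.natCast_nonneg _
        omega
    intro u v huv
    rcases lt_trichotomy (eq.symm u).val (eq.symm v).val with hlt | heq2 | hgt
    · exact main u v hlt
    · exact absurd (by
        have : eq.symm u = eq.symm v := Fin.ext heq2
        simpa using congrArg eq this) huv
    · have := main v u hgt
      rw [cycleDist_symm, abs_sub_comm] at this
      exact this
  · -- span value
    have hL0 : L 0 = 0 := by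
      rw [hLdef]
      unfold LL
      rw [Nat.zero_div, Nat.zero_mod, hLam0]
      simp
    obtain ⟨g0, hg0⟩ : ∃ g0, γ = g0 + 1 := ⟨γ-1, by omega⟩
    obtain ⟨m0, hm0⟩ : ∃ m0, m1 = m0 + 1 := ⟨m1-1, by omega⟩
    have hLval : L (n-1) = M * A + (M - 1) * Bb + (γ - 1) := by
      have hprod : (g0+1)*n1 = g0*n1 + n1 := by ring
      rw [show n - 1 = g0*n1 + (n1-1) by rw [hn', hg0]; omega,
        hLpair g0 (n1-1) (by omega), hPdef, hLamLast, hAdef, hBbdef, hMdef, hg0, hm0]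
      rw [show m0 + 1 - 1 = m0 by omega, show (g0+1)*(m0+1) - 1 = g0*m0+g0+m0 by
        have : (g0+1)*(m0+1) = g0*m0+g0+m0+1 := by ring
        omega, show g0 + 1 - 1 = g0 by omega]
      ring
    have hspan : spanOf n (fun v => L (eq.symm v).val) = L (n-1) := by
      apply le_antisymm
      · unfold spanOf
        apply Finset.sup_le
        intro u _
        apply Finset.sup_le
        intro v _
        exact le_trans (Nat.sub_le _ _) (hmono _ _ (by omega))
      · have h1 : ∀ g : Fin n → ℕ, ∀ u0 v0 : Fin n, g u0 - g v0 ≤ spanOf n g := by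
          intro g u0 v0
          unfold spanOf
          exact le_trans (Finset.le_sup (f := fun v => g u0 - g v) (Finset.mem_univ v0))
            (Finset.le_sup (f := fun u => Finset.univ.sup fun v => g u - g v)
              (Finset.mem_univ u0))
        have hnlt : n - 1 < n := by omega
        have h2 := h1 (fun v => L (eq.symm v).val) (eq ⟨n-1, hnlt⟩) (eq ⟨0, hnpos⟩)
        simp only [Equiv.symm_apply_apply] at h2
        rw [hL0] at h2
        simpa using h2
    rw [hspan, hLval, hMdef, hAdef, hBbdef]

lemma walk_card {α : Type*} [DecidableEq α] (w : ℕ → α) :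
    ∀ M : ℕ, ((Finset.range (M+1)).image w).card
      ≤ 1 + ((Finset.range M).filter (fun j => w (j+1) ≠ w j)).card := by
  intro M
  induction M with
  | zero => simp
  | succ M ih =>
    have himg : (Finset.range (M+1+1)).image w
        = insert (w (M+1)) ((Finset.range (M+1)).image w) := by
      rw [Finset.range_add_one, Finset.image_insert]
    have hfil : (Finset.range (M+1)).filter (fun j => w (j+1) ≠ w j)
        = if w (M+1) ≠ w M then insert M ((Finset.range M).filter (fun j => w (j+1) ≠ w j))
          else (Finset.range M).filter (fun j => w (j+1) ≠ w j) := by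
      rw [Finset.range_add_one, Finset.filter_insert]
    rw [himg, hfil]
    by_cases hch : w (M+1) ≠ w M
    · rw [if_pos hch, Finset.card_insert_of_notMem (fun hmem =>
        absurd (Finset.mem_of_mem_filter M hmem) (by simp))]
      have := Finset.card_insert_le (w (M+1)) ((Finset.range (M+1)).image w)
      omega
    · rw [if_neg hch]
      push_neg at hch
      have hmem : w (M+1) ∈ (Finset.range (M+1)).image w := by
        rw [hch]
        exact Finset.mem_image.mpr ⟨M, Finset.self_mem_range_succ M, rfl⟩
      rw [Finset.insert_eq_self.mpr hmem]
      exact ih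

lemma lowerBound (n k m h0 q : ℕ) (hm : n = 2*m)
    (hk' : k + 1 + 2*h0 = 2*m) (hh2 : 2 ≤ h0) (hmk : m ≤ k)
    (hq : Nat.gcd n h0 = 2*q)
    (f : Fin n → ℕ) (hf : IsRadioLabeling n k f) :
    (2*m - 3*h0)*(m-1) + (k - m + 1) + (q - 1) ≤ spanOf n f := by
  have hm2 : 2*h0 + 1 ≤ m := by omega
  have hnpos : 0 < n := by omega
  have hn10 : 10 ≤ n := by omega
  have hgcdpos : 0 < Nat.gcd n h0 := Nat.gcd_pos_of_pos_right n (by omega)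
  have hq1 : 1 ≤ q := by omega
  have hpn : 2*q ∣ n := hq ▸ Nat.gcd_dvd_left n h0
  have hph : 2*q ∣ h0 := hq ▸ Nat.gcd_dvd_right n h0
  have hqh : 2*q ≤ h0 := Nat.le_of_dvd (by omega) hph
  have hdle : ∀ u v : Fin n, cycleDist n u v ≤ m := by
    intro u v
    rw [cycleDist_eq hnpos]
    have := idist_le_half (n := n) ((v.val:ℤ) - u.val)
    omega
  have hfinj : Function.Injective f := by
    intro u v huv
    by_contra hne
    have h3 := hf u v hne
    rw [huv, sub_self, abs_zero] at h3
    have h4 := hdle u v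
    have h5 : (cycleDist n u v : ℤ) ≤ (m:ℤ) := by exact_mod_cast h4
    omega
  set σ := Tuple.sort f with hσ
  have hFmono : Monotone (f ∘ σ) := Tuple.monotone_sort f
  have hFsm : StrictMono (f ∘ σ) := hFmono.strictMono_of_injective (hfinj.comp σ.injective)
  have hn1pos : 0 < n - 1 + 1 := by omega
  set V : ℕ → Fin n := fun i => σ ⟨min i (n-1), by omega⟩ with hV
  set Fi : ℕ → ℤ := fun i => (f (V i) : ℤ) with hFi
  have hVne : ∀ i j : ℕ, i < n → j < n → i ≠ j → V i ≠ V j := by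
    intro i j hi hj hij hcon
    have h1 := σ.injective hcon
    have h2 : min i (n-1) = min j (n-1) := congrArg Fin.val h1
    omega
  have hFle : ∀ i j : ℕ, i ≤ j → Fi i ≤ Fi j := by
    intro i j hij
    have h1 : (⟨min i (n-1), by omega⟩ : Fin n) ≤ ⟨min j (n-1), by omega⟩ := by
      rw [Fin.mk_le_mk]; omega
    have := hFmono h1
    simp only [hFi, hV, Function.comp] at this ⊢
    exact_mod_cast this
  have hrad : ∀ i j : ℕ, i < j → j < n →
      (k:ℤ) + 1 ≤ (Fi j - Fi i) + cycleDist n (V i) (V j) := by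
    intro i j hij hj
    have hne := hVne i j (by omega) hj (by omega)
    have h3 := hf (V i) (V j) hne
    have hle := hFle i j (by omega)
    rw [abs_sub_comm, abs_of_nonneg (by simp only [hFi] at hle; omega)] at h3
    simp only [hFi] at hle ⊢
    omega
  set p := 2*q with hp
  haveI : NeZero p := ⟨by omega⟩
  set R : ℕ → ZMod p := fun i => ((V i).val : ZMod p) with hR
  have hres : ∀ i : ℕ, cycleDist n (V i) (V (i+2)) = h0 → R (i+2) = R i := by
    intro i hd
    have hcd := cycleDist_eq hnpos (V i) (V (i+2))
    rw [hd] at hcd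
    set x : ℤ := ((V (i+2)).val : ℤ) - (V i).val with hx
    have h1 : 0 ≤ x % n := Int.emod_nonneg _ (by exact_mod_cast hnpos.ne')
    have h2 : (x % (n:ℤ)).toNat < n := idist_nonneg_lt hnpos x
    have hxmod : x % n = (h0:ℤ) ∨ x % n = (n:ℤ) - h0 := by
      unfold idist at hcd
      omega
    have hdvd : ((p:ℕ):ℤ) ∣ x := by
      have hpn' : ((p:ℕ):ℤ) ∣ (n:ℤ) := Int.natCast_dvd_natCast.mpr hpn
      have hph' : ((p:ℕ):ℤ) ∣ (h0:ℤ) := Int.natCast_dvd_natCast.mpr hph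
      have hxeq := Int.mul_ediv_add_emod x n
      rcases hxmod with hcase | hcase
      · rw [show x = (n:ℤ)*(x / n) + h0 by omega]
        exact dvd_add (hpn'.mul_right _) hph'
      · rw [show x = (n:ℤ)*(x / n) + ((n:ℤ) - h0) by omega]
        exact dvd_add (hpn'.mul_right _) (dvd_sub hpn' hph')
    have hzero : ((x : ℤ) : ZMod p) = 0 := (ZMod.intCast_zmod_eq_zero_iff_dvd x p).mpr hdvd
    have hxcast : ((x : ℤ) : ZMod p) = ((V (i+2)).val : ZMod p) - ((V i).val : ZMod p) := by
      rw [hx]; push_cast; ring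
    rw [hxcast] at hzero
    simp only [hR]
    exact sub_eq_zero.mp hzero
  have hkey : ∀ i : ℕ, i + 2 < n →
      (2*(m:ℤ) - 3*h0) + (if R (i+2) = R i then 0 else 1) ≤ Fi (i+2) - Fi i := by
    intro i hi
    have c1 := hrad i (i+1) (by omega) (by omega)
    have c2 := hrad (i+1) (i+2) (by omega) hi
    have c3 := hrad i (i+2) (by omega) hi
    have tri : cycleDist n (V i) (V (i+1)) + cycleDist n (V (i+1)) (V (i+2))
        + cycleDist n (V i) (V (i+2)) ≤ n := by
      rw [cycleDist_eq hnpos, cycleDist_eq hnpos, cycleDist_eq hnpos]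
      have h5 := idist_sum_le hnpos (((V (i+1)).val:ℤ) - (V i).val)
        (((V (i+2)).val:ℤ) - (V (i+1)).val)
      rw [show ((V (i+1)).val:ℤ) - (V i).val + ((((V (i+2)).val:ℤ)) - (V (i+1)).val)
        = ((V (i+2)).val:ℤ) - (V i).val by ring] at h5
      exact h5
    have hd3le := hdle (V i) (V (i+2))
    have hd1le := hdle (V i) (V (i+1))
    have hd2le := hdle (V (i+1)) (V (i+2))
    by_cases hRR : R (i+2) = R i
    · rw [if_pos hRR]
      omega
    · rw [if_neg hRR]
      by_contra hcon
      push_neg at hcon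
      have hd3 : cycleDist n (V i) (V (i+2)) = h0 := by omega
      exact hRR (hres i hd3)
  -- summation
  have htel1 : ∑ i ∈ Finset.range (n-2), (Fi (i+2) - Fi (i+1)) = Fi (n-1) - Fi 1 := by
    have := Finset.sum_range_sub (fun i => Fi (i+1)) (n-2)
    rw [show n-2+1 = n-1 by omega] at this
    exact this
  have htel2 : ∑ i ∈ Finset.range (n-2), (Fi (i+1) - Fi i) = Fi (n-2) - Fi 0 :=
    Finset.sum_range_sub Fi (n-2)
  have hS2a : ∑ i ∈ Finset.range (n-2), (Fi (i+2) - Fi i)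
      = (Fi (n-1) - Fi 1) + (Fi (n-2) - Fi 0) := by
    rw [← htel1, ← htel2, ← Finset.sum_add_distrib]
    apply Finset.sum_congr rfl
    intro i _
    ring
  have hS2b : ((n:ℤ)-2) * (2*(m:ℤ) - 3*h0)
      + ((Finset.range (n-2)).filter (fun i => ¬ (R (i+2) = R i))).card
      ≤ ∑ i ∈ Finset.range (n-2), (Fi (i+2) - Fi i) := by
    have h1 : ∀ i ∈ Finset.range (n-2),
        (2*(m:ℤ) - 3*h0) + (if ¬ (R (i+2) = R i) then (1:ℤ) else 0) ≤ Fi (i+2) - Fi i := by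
      intro i hi
      have hi2 : i + 2 < n := by
        have := Finset.mem_range.mp hi; omega
      have := hkey i hi2
      by_cases hRR : R (i+2) = R i
      · rw [if_neg (by simpa using hRR)]
        rw [if_pos hRR] at this
        omega
      · rw [if_pos hRR]
        rw [if_neg hRR] at this
        omega
    have h2 := Finset.sum_le_sum h1
    rw [Finset.sum_add_distrib, Finset.sum_const, Finset.sum_boole] at h2
    simp only [Finset.card_range, nsmul_eq_mul] at h2
    calc ((n:ℤ)-2) * (2*(m:ℤ) - 3*h0)
        + ((Finset.range (n-2)).filter (fun i => ¬ (R (i+2) = R i))).card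
        = ((n-2 : ℕ):ℤ) * (2*(m:ℤ) - 3*h0)
          + ((Finset.range (n-2)).filter (fun i => ¬ (R (i+2) = R i))).card := by
          rw [show ((n-2:ℕ):ℤ) = (n:ℤ)-2 by push_cast [Nat.cast_sub (by omega : 2 ≤ n)]; ring]
      _ ≤ _ := h2
  have hend1 : (k:ℤ) + 1 - m ≤ Fi 1 - Fi 0 := by
    have h1 := hrad 0 1 (by omega) (by omega)
    have hd : (cycleDist n (V 0) (V 1) : ℤ) ≤ (m:ℤ) := by exact_mod_cast hdle _ _
    omega
  have hend2 : (k:ℤ) + 1 - m ≤ Fi (n-1) - Fi (n-2) := by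
    have h1 := hrad (n-2) (n-1) (by omega) (by omega)
    have hd : (cycleDist n (V (n-2)) (V (n-1)) : ℤ) ≤ (m:ℤ) := by exact_mod_cast hdle _ _
    omega
  have hspan : Fi (n-1) - Fi 0 ≤ (spanOf n f : ℤ) := by
    have h1 : f (V (n-1)) - f (V 0) ≤ spanOf n f := by
      unfold spanOf
      exact le_trans (Finset.le_sup (f := fun v => f (V (n-1)) - f v) (Finset.mem_univ (V 0)))
        (Finset.le_sup (f := fun u => Finset.univ.sup fun v => f u - f v)
          (Finset.mem_univ (V (n-1))))
    have h2 := hFle 0 (n-1) (by omega)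
    simp only [hFi] at h2 ⊢
    omega
  -- counting
  have hcard : (p:ℤ) - 2
      ≤ (((Finset.range (n-2)).filter (fun i => ¬ (R (i+2) = R i))).card : ℤ) := by
    have hwalkE := walk_card (fun j => R (2*j)) (m-1)
    have hwalkO := walk_card (fun j => R (2*j+1)) (m-1)
    rw [show m-1+1 = m by omega] at hwalkE hwalkO
    have hcover : ∀ ρ : ZMod p, ρ ∈
        ((Finset.range m).image (fun j => R (2*j)))
          ∪ ((Finset.range m).image (fun j => R (2*j+1))) := by
      intro ρ
      have hρlt : ρ.val < n := lt_of_lt_of_le (ZMod.val_lt ρ) (by omega)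
      set u : Fin n := ⟨ρ.val, hρlt⟩ with hu
      set i₀ := (σ.symm u).val with hi₀
      have hilt : i₀ < n := (σ.symm u).isLt
      have hVi : V i₀ = u := by
        have : (⟨min i₀ (n-1), by omega⟩ : Fin n) = σ.symm u := by
          apply Fin.ext
          simp only []
          omega
        simp only [hV, this, Equiv.apply_symm_apply]
      have hRi : R i₀ = ρ := by
        simp only [hR, hVi, hu]
        exact ZMod.natCast_rightInverse ρ
      rcases Nat.even_or_odd' i₀ with ⟨j, hj | hj⟩
      · apply Finset.mem_union_left
        exact Finset.mem_image.mpr ⟨j, Finset.mem_range.mpr (by omega), by rw [← hj, hRi]⟩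
      · apply Finset.mem_union_right
        exact Finset.mem_image.mpr ⟨j, Finset.mem_range.mpr (by omega), by rw [← hj, hRi]⟩
    set BS := (Finset.range (n-2)).filter (fun i => ¬ (R (i+2) = R i)) with hBS
    set FE := (Finset.range (m-1)).filter
      (fun j => (fun j => R (2*j)) (j+1) ≠ (fun j => R (2*j)) j) with hFE
    set FO := (Finset.range (m-1)).filter
      (fun j => (fun j => R (2*j+1)) (j+1) ≠ (fun j => R (2*j+1)) j) with hFO
    have himgs : (FE.image (fun j => 2*j)) ∪ (FO.image (fun j => 2*j+1)) ⊆ BS := by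
      intro i hi
      rcases Finset.mem_union.mp hi with hiE | hiO
      · obtain ⟨j, hjmem, rfl⟩ := Finset.mem_image.mp hiE
        obtain ⟨hjr, hjp⟩ := Finset.mem_filter.mp hjmem
        refine Finset.mem_filter.mpr ⟨Finset.mem_range.mpr ?_, ?_⟩
        · have := Finset.mem_range.mp hjr; omega
        · show ¬ R (2*j+2) = R (2*j)
          rw [show 2*j+2 = 2*(j+1) by ring]
          exact hjp
      · obtain ⟨j, hjmem, rfl⟩ := Finset.mem_image.mp hiO
        obtain ⟨hjr, hjp⟩ := Finset.mem_filter.mp hjmem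
        refine Finset.mem_filter.mpr ⟨Finset.mem_range.mpr ?_, ?_⟩
        · have := Finset.mem_range.mp hjr; omega
        · show ¬ R (2*j+1+2) = R (2*j+1)
          rw [show 2*j+1+2 = 2*(j+1)+1 by ring]
          exact hjp
    have hdisj : Disjoint (FE.image (fun j => 2*j)) (FO.image (fun j => 2*j+1)) := by
      rw [Finset.disjoint_left]
      intro a haE haO
      obtain ⟨j1, -, hj1⟩ := Finset.mem_image.mp haE
      obtain ⟨j2, -, hj2⟩ := Finset.mem_image.mp haO
      omega
    have hcE : (FE.image (fun j => 2*j)).card = FE.card :=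
      Finset.card_image_of_injective _ (fun a b hab => by omega)
    have hcO : (FO.image (fun j => 2*j+1)).card = FO.card :=
      Finset.card_image_of_injective _ (fun a b hab => by omega)
    have hsum : FE.card + FO.card ≤ BS.card := by
      have h1 := Finset.card_le_card himgs
      rw [Finset.card_union_of_disjoint hdisj, hcE, hcO] at h1
      exact h1
    have hpcard : p ≤ ((Finset.range m).image (fun j => R (2*j))).card
        + ((Finset.range m).image (fun j => R (2*j+1))).card := by
      have h1 : (Finset.univ : Finset (ZMod p)) ⊆ _ := fun ρ _ => hcover ρ
      have h2 := Finset.card_le_card h1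
      rw [Finset.card_univ, ZMod.card] at h2
      exact le_trans h2 (Finset.card_union_le _ _)
    have : p ≤ 2 + BS.card := by omega
    push_cast
    omega
  -- final assembly
  have hprodsplit : ((n:ℤ)-2) * (2*(m:ℤ) - 3*h0)
      = 2*(((m:ℤ)-1) * (2*(m:ℤ)-3*h0)) := by
    rw [hm]; push_cast; ring
  have hfin2 : 2*(Fi (n-1) - Fi 0)
      = (∑ i ∈ Finset.range (n-2), (Fi (i+2) - Fi i)) + (Fi 1 - Fi 0)
        + (Fi (n-1) - Fi (n-2)) := by
    rw [hS2a]; ring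
  have hp2 : (p:ℤ) = 2*(q:ℤ) := by rw [hp]; push_cast; ring
  have hfinal : ((m:ℤ)-1) * (2*(m:ℤ)-3*h0) + ((k:ℤ) - m + 1) + ((q:ℤ) - 1)
      ≤ (spanOf n f : ℤ) := by
    linarith [hS2b, hcard, hend1, hend2, hspan, hfin2, hprodsplit]
  have hcast : (((2*m - 3*h0)*(m-1) + (k - m + 1) + (q - 1) : ℕ) : ℤ)
      = ((m:ℤ)-1) * (2*(m:ℤ)-3*h0) + ((k:ℤ) - m + 1) + ((q:ℤ) - 1) := by
    push_cast [Nat.cast_sub (show 3*h0 ≤ 2*m by omega), Nat.cast_sub (show 1 ≤ m by omega),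
      Nat.cast_sub (show 1 ≤ q by omega), Nat.cast_sub hmk]
    ring
  rw [← hcast] at hfinal
  exact_mod_cast hfinal

lemma mem_zmultiples_iff (n h0 mm : ℕ) :
    ((mm:ℕ) : ZMod n) ∈ AddSubgroup.zmultiples ((h0:ℕ) : ZMod n) ↔ Nat.gcd n h0 ∣ mm := by
  constructor
  · rintro ⟨z, hz⟩
    have h2 : ((z : ℤ) : ZMod n) * ((h0:ℕ) : ZMod n) = ((mm:ℕ) : ZMod n) := by
      rw [← zsmul_eq_mul]; exact_mod_cast hz
    have h3 : ((z * h0 - mm : ℤ) : ZMod n) = 0 := by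
      push_cast
      rw [h2]; ring
    have hdvd : (n:ℤ) ∣ (z*h0 - mm) := (ZMod.intCast_zmod_eq_zero_iff_dvd _ n).mp h3
    have hg1 : (Nat.gcd n h0 : ℤ) ∣ (n:ℤ) := Int.natCast_dvd_natCast.mpr (Nat.gcd_dvd_left _ _)
    have hg2 : (Nat.gcd n h0 : ℤ) ∣ (h0:ℤ) := Int.natCast_dvd_natCast.mpr (Nat.gcd_dvd_right _ _)
    have h4 : (Nat.gcd n h0 : ℤ) ∣ (mm:ℤ) := by
      rw [show (mm:ℤ) = z*h0 - (z*h0-mm) by ring]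
      exact dvd_sub (Dvd.dvd.mul_left hg2 z) (dvd_trans hg1 hdvd)
    exact_mod_cast h4
  · rintro ⟨t, ht⟩
    refine ⟨(t : ℤ) * Nat.gcdB n h0, ?_⟩
    have hbez := Nat.gcd_eq_gcd_ab n h0
    have hmz : (mm:ℤ) = (Nat.gcd n h0 : ℤ) * t := by exact_mod_cast ht
    have h3 : (((t:ℤ) * Nat.gcdB n h0 * h0 - mm : ℤ) : ZMod n) = 0 := by
      apply (ZMod.intCast_zmod_eq_zero_iff_dvd _ n).mpr
      refine ⟨-(t * Nat.gcdA n h0), ?_⟩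
      rw [hmz, hbez]; ring
    have h4 : ((((t:ℤ) * Nat.gcdB n h0 * h0 : ℤ)) : ZMod n) = ((mm:ℕ) : ZMod n) := by
      have h5 : ((((t:ℤ) * Nat.gcdB n h0 * h0 : ℤ)) : ZMod n) - ((mm:ℕ) : ZMod n) = 0 := by
        rw [← h3]; push_cast; ring
      linear_combination h5
    show ((t:ℤ) * Nat.gcdB n h0) • ((h0:ℕ) : ZMod n) = ((mm:ℕ) : ZMod n)
    rw [zsmul_eq_mul]
    calc ((((t:ℤ) * Nat.gcdB n h0 : ℤ)) : ZMod n) * ((h0:ℕ) : ZMod n)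
        = ((((t:ℤ) * Nat.gcdB n h0 * h0 : ℤ)) : ZMod n) := by push_cast; ring
      _ = ((mm:ℕ) : ZMod n) := h4

end S16

/-- `n` even, `k` odd, `n/2 ≤ k < n-3`, `h = (n-k-1)/2`, `p = gcd(n,h)`:
`rn_k(C_n) ≤ LB(n,k) + p - 1`; moreover if `n/2 ∉ ⟨h⟩ ≤ ℤ_n` then
`rn_k(C_n) = LB(n,k) + ⌈p/2⌉ - 1`. -/
theorem stmt16 (n k : ℕ) (he : Even n) (hko : Odd k) (h1 : n / 2 ≤ k) (h2 : k < n - 3) :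
    rn n k ≤ (3 * k + 3 - n) / 2 * ((n - 2) / 2) + (k - n / 2) + 1 +
      (Nat.gcd n ((n - k - 1) / 2) - 1) ∧
    (((n / 2 : ℕ) : ZMod n) ∉ AddSubgroup.zmultiples (((n - k - 1) / 2 : ℕ) : ZMod n) →
      rn n k = (3 * k + 3 - n) / 2 * ((n - 2) / 2) + (k - n / 2) + 1 +
        ((Nat.gcd n ((n - k - 1) / 2) + 1) / 2 - 1)) := by
  have hn2 : n % 2 = 0 := Nat.even_iff.mp he
  have hk2 : k % 2 = 1 := Nat.odd_iff.mp hko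
  set m := n / 2 with hmdef
  have hm : n = 2*m := by omega
  set h0 := (n - k - 1)/2 with hh0def
  have hh0 : n - k - 1 = 2*h0 := by omega
  have hkn : k + 4 ≤ n := by omega
  have hk' : k + 1 + 2*h0 = 2*m := by omega
  have hh2 : 2 ≤ h0 := by omega
  have hmk : m ≤ k := h1
  have hm2h : 2*h0 + 1 ≤ m := by omega
  set a0 := m - 2*h0 with ha0def
  have ha0 : m = 2*h0 + a0 := by omega
  have ha0pos : 0 < a0 := by omega
  set p := Nat.gcd n h0 with hpdef
  have hpn : p ∣ n := Nat.gcd_dvd_left n h0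
  have hph : p ∣ h0 := Nat.gcd_dvd_right n h0
  have hppos : 0 < p := Nat.gcd_pos_of_pos_right n (by omega)
  have hple : p ≤ h0 := Nat.le_of_dvd (by omega) hph
  have hg1 : (3*k+3-n)/2 = 2*m - 3*h0 := by omega
  have hg2 : (n-2)/2 = m - 1 := by omega
  have hg3 : k - m = a0 - 1 := by omega
  rw [hg1, hg2, hg3]
  set W := (2*m - 3*h0)*(m-1) with hWdef
  have ha0Z : (m:ℤ) = 2*(h0:ℤ) + (a0:ℤ) := by exact_mod_cast ha0
  -- identity helper
  have hident : ∀ x : ℕ, m*a0 + (m-1)*(h0+a0) + x = W + a0 + x := by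
    intro x
    have : m*a0 + (m-1)*(h0+a0) = W + a0 := by
      rw [hWdef]
      zify [show 1 ≤ m by omega, show 3*h0 ≤ 2*m by omega]
      linear_combination (2 - 2*(m:ℤ)) * ha0Z
    omega
  by_cases hcase : p ∣ m
  · -- Case B : γ = p
    have hpa : p ∣ a0 := Nat.dvd_sub hcase (Dvd.dvd.mul_left hph 2)
    set ht := h0 / p with htdef
    set a1 := a0 / p with ha1def
    have hγht : p * ht = h0 := Nat.mul_div_cancel' hph
    have hγa1 : p * a1 = a0 := Nat.mul_div_cancel' hpa
    have hhtpos : 0 < ht := by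
      rcases Nat.eq_zero_or_pos ht with h | h
      · rw [h, Nat.mul_zero] at hγht; omega
      · exact h
    have ha1pos : 0 < a1 := by
      rcases Nat.eq_zero_or_pos a1 with h | h
      · rw [h, Nat.mul_zero] at hγa1; omega
      · exact h
    have hm1 : p * (2*ht + a1) = m := by
      have hh : p*(2*ht+a1) = 2*(p*ht) + p*a1 := by ring
      omega
    have hnn : n = p * (2*(2*ht+a1)) := by
      have hh : p*(2*(2*ht+a1)) = 2*(p*(2*ht+a1)) := by ring
      omega
    have hkk : k + 1 = 2*p*(ht+a1) := by
      have hh : 2*p*(ht+a1) = 2*(p*ht) + 2*(p*a1) := by ring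
      omega
    have hgcd1 : Nat.Coprime (2*(2*ht+a1)) ht := by
      have h3 : p * Nat.gcd (2*(2*ht+a1)) ht = p * 1 := by
        rw [Nat.mul_one, ← Nat.gcd_mul_left p (2*(2*ht+a1)) ht, hγht, ← hnn]
      exact Nat.eq_of_mul_eq_mul_left hppos h3
    have hn1eq : 4*ht + 2*a1 = 2*(2*ht+a1) := by ring
    have hinjE : ∀ d : ℕ, 0 < d → d < 2*ht + a1 → ¬ ((4*ht + 2*a1) ∣ d * ht) := by
      intro d hd0 hdlt hdvd
      rw [hn1eq] at hdvd
      have h3 : (2*(2*ht+a1)) ∣ d := hgcd1.dvd_of_dvd_mul_right hdvd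
      have := Nat.le_of_dvd hd0 h3
      omega
    have hinjO : ∀ d : ℤ, d.natAbs < 2*ht + a1 →
        ¬ (((4*ht + 2*a1 : ℕ) : ℤ) ∣ d * (ht:ℤ) - ((2*ht + a1 : ℕ) : ℤ)) := by
      intro d hd hdvd
      have h3 : ((4*ht+2*a1 : ℕ):ℤ) ∣ 2*d*(ht:ℤ) := by
        have h4 := Dvd.dvd.mul_left hdvd 2
        have h5 : (2:ℤ)*(d * (ht:ℤ) - ((2*ht + a1 : ℕ) : ℤ))
            = 2*d*(ht:ℤ) - ((4*ht+2*a1:ℕ):ℤ) := by push_cast; ring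
        rw [h5] at h4
        have h6 := dvd_add h4 (dvd_refl ((4*ht+2*a1:ℕ):ℤ))
        simpa using h6
      have h6 : (4*ht+2*a1) ∣ (2*d).natAbs * ht := by
        have h7 := Int.natAbs_dvd_natAbs.mpr h3
        rw [show (2:ℤ)*d*(ht:ℤ) = (2*d)*(ht:ℤ) by ring] at h7
        rw [Int.natAbs_natCast] at h7
        simpa [Int.natAbs_mul] using h7
      rw [hn1eq] at h6
      have h7 : 2*(2*ht+a1) ∣ (2*d).natAbs := hgcd1.dvd_of_dvd_mul_right h6
      have h8 : d = 0 := by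
        have h9 : (2*d).natAbs < 2*(2*ht+a1) := by omega
        rcases Nat.eq_zero_or_pos (2*d).natAbs with h | h
        · omega
        · exact absurd (Nat.le_of_dvd h h7) (by omega)
      rw [h8, zero_mul, zero_sub] at hdvd
      have h10 : (4*ht+2*a1) ∣ (2*ht+a1) := Int.natCast_dvd_natCast.mp (dvd_neg.mp hdvd)
      have := Nat.le_of_dvd (by omega) h10
      omega
    obtain ⟨f, hfrad, hfspan⟩ :=
      S16.constructionMain n k p ht a1 hppos hhtpos ha1pos hnn hkk hinjE hinjO
    have hpha : p*(ht+a1) = h0 + a0 := by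
      have hh : p*(ht+a1) = p*ht + p*a1 := by ring
      omega
    have hspan2 : spanOf n f = W + a0 + (p - 1) := by
      rw [hfspan, hm1, hγa1, hpha, hident]
    have hub : rn n k ≤ W + a0 + (p - 1) := by
      apply Nat.sInf_le
      exact ⟨f, hfrad, hspan2⟩
    constructor
    · exact le_trans hub (by omega)
    · intro hcond
      exfalso
      exact hcond ((S16.mem_zmultiples_iff n h0 m).mpr (hpdef ▸ hcase))
  · -- Case C : γ = q = p/2
    have hpeven : 2 ∣ p := by
      by_contra hodd
      have hcop : Nat.Coprime p 2 := by
        rcases Nat.coprime_or_dvd_of_prime Nat.prime_two p with h | h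
        · exact h.symm
        · exact absurd h hodd
      exact hcase (hcop.dvd_of_dvd_mul_left (hm ▸ hpn))
    obtain ⟨q, hq⟩ := hpeven
    have hq1 : 1 ≤ q := by omega
    have hqh : q ∣ h0 := dvd_trans ⟨2, by omega⟩ hph
    have hqm : q ∣ m := by
      have h3 : 2*q ∣ 2*m := by rw [← hq, ← hm]; exact hpn
      exact (mul_dvd_mul_iff_left (two_ne_zero)).mp h3
    have hqa : q ∣ a0 := Nat.dvd_sub hqm (Dvd.dvd.mul_left hqh 2)
    set ht := h0 / q with htdef
    set a1 := a0 / q with ha1def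
    have hγht : q * ht = h0 := Nat.mul_div_cancel' hqh
    have hγa1 : q * a1 = a0 := Nat.mul_div_cancel' hqa
    have hhtpos : 0 < ht := by
      rcases Nat.eq_zero_or_pos ht with h | h
      · rw [h, Nat.mul_zero] at hγht; omega
      · exact h
    have ha1pos : 0 < a1 := by
      rcases Nat.eq_zero_or_pos a1 with h | h
      · rw [h, Nat.mul_zero] at hγa1; omega
      · exact h
    have hm1 : q * (2*ht + a1) = m := by
      have hh : q*(2*ht+a1) = 2*(q*ht) + q*a1 := by ring
      omega
    have hnn : n = q * (2*(2*ht+a1)) := by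
      have hh : q*(2*(2*ht+a1)) = 2*(q*(2*ht+a1)) := by ring
      omega
    have hkk : k + 1 = 2*q*(ht+a1) := by
      have hh : 2*q*(ht+a1) = 2*(q*ht) + 2*(q*a1) := by ring
      omega
    have hgcd2 : Nat.gcd (2*(2*ht+a1)) ht = 2 := by
      have h3 : q * Nat.gcd (2*(2*ht+a1)) ht = q * 2 := by
        rw [← Nat.gcd_mul_left q (2*(2*ht+a1)) ht, hγht, ← hnn, ← hpdef]
        omega
      exact Nat.eq_of_mul_eq_mul_left (by omega) h3
    have hhteven : 2 ∣ ht := by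
      have := Nat.gcd_dvd_right (2*(2*ht+a1)) ht
      rw [hgcd2] at this
      exact this
    obtain ⟨v, hv⟩ := hhteven
    have hm1odd : ¬ (2 ∣ (2*ht+a1)) := by
      intro hdvd
      obtain ⟨w, hw⟩ := hdvd
      apply hcase
      rw [hq]
      exact ⟨w, by rw [← hm1, hw]; ring⟩
    have hgcdmv : Nat.Coprime (2*ht+a1) v := by
      have h3 : 2 * Nat.gcd (2*ht+a1) v = 2 := by
        rw [← Nat.gcd_mul_left 2 (2*ht+a1) v, ← hv]
        exact hgcd2
      have h4 : Nat.gcd (2*ht+a1) v = 1 := by omega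
      exact h4
    have hinjE : ∀ d : ℕ, 0 < d → d < 2*ht + a1 → ¬ ((4*ht + 2*a1) ∣ d * ht) := by
      intro d hd0 hdlt hdvd
      have h3 : (2*ht+a1) ∣ d * v := by
        rcases hdvd with ⟨w, hw⟩
        refine ⟨w, ?_⟩
        have hh : d * (2*v) = 2*(d*v) := by ring
        have hh2 : (4*ht+2*a1) * w = 2*((2*ht+a1)*w) := by ring
        have hh3 : d * ht = d * (2*v) := by rw [hv]
        omega
      have h4 : (2*ht+a1) ∣ d := hgcdmv.dvd_of_dvd_mul_right h3
      have := Nat.le_of_dvd hd0 h4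
      omega
    have hinjO : ∀ d : ℤ, d.natAbs < 2*ht + a1 →
        ¬ (((4*ht + 2*a1 : ℕ) : ℤ) ∣ d * (ht:ℤ) - ((2*ht + a1 : ℕ) : ℤ)) := by
      intro d hd hdvd
      rcases hdvd with ⟨w, hw⟩
      have h3 : (2:ℤ) ∣ ((2*ht+a1 : ℕ) : ℤ) := by
        refine ⟨d * v - ((2*ht+a1:ℕ):ℤ) * w, ?_⟩
        have hvZ : (ht:ℤ) = 2*(v:ℤ) := by exact_mod_cast hv
        have hn1Z : ((4*ht+2*a1 : ℕ):ℤ) = 2*((2*ht+a1:ℕ):ℤ) := by push_cast; ring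
        rw [hvZ, hn1Z] at hw
        linarith
      have h4 : 2 ∣ (2*ht+a1) := by exact_mod_cast h3
      exact hm1odd h4
    obtain ⟨f, hfrad, hfspan⟩ :=
      S16.constructionMain n k q ht a1 (by omega) hhtpos ha1pos hnn hkk hinjE hinjO
    have hpha : q*(ht+a1) = h0 + a0 := by
      have hh : q*(ht+a1) = q*ht + q*a1 := by ring
      omega
    have hspan2 : spanOf n f = W + a0 + (q - 1) := by
      rw [hfspan, hm1, hγa1, hpha, hident]
    have hub : rn n k ≤ W + a0 + (q - 1) := by
      apply Nat.sInf_le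
      exact ⟨f, hfrad, hspan2⟩
    constructor
    · exact le_trans hub (by omega)
    · intro hcond
      apply le_antisymm
      · exact le_trans hub (by omega)
      · refine le_csInf ⟨W + a0 + (q - 1), ⟨f, hfrad, hspan2⟩⟩ ?_
        rintro b ⟨f', hfrad', rfl⟩
        have hlow := S16.lowerBound n k m h0 q hm hk' hh2 hmk (by omega) f' hfrad'
        rw [← hWdef] at hlow
        have hkm1 : k - m + 1 = a0 := by omega
        rw [hkm1] at hlow
        omega
end
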